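/- arXiv:2605.27248 — 6 statements merged into one kernel-verified Lean document; each statement's English description precedes it below -/
import Mathlib

section
/- Let D = (x_1,…,x_n) be an n-run OofA design on m components and let M = XᵀX be the moment matrix of its PWO model matrix X. Then tr(M²) = 4 n(n−1) k_{m2}(D) − {2m(m−1)+4} n(n−1) k_ave(D) + n²(m²−m+2)²/4. -/
/-- A run (addition order) on `m` components: position `r` receives component `x r`.
The position map `π_x` is `x.symm`. -/
abbrev Run (m : ℕ) := Equiv.Perm (Fin m)

/-- Kendall tau distance between two runs. -/
def kendall {m : ℕ} (x y : Run m) : ℕ :=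
  (Finset.univ.filter fun p : Fin m × Fin m =>
    p.1 < p.2 ∧
      (((x.symm p.1 : ℕ) : ℤ) - ((x.symm p.2 : ℕ) : ℤ)) *
        (((y.symm p.1 : ℕ) : ℤ) - ((y.symm p.2 : ℕ) : ℤ)) < 0).card

/-- Average pairwise Kendall tau distance of an `n`-run design. -/
noncomputable def kave {m n : ℕ} (D : Fin n → Run m) : ℝ :=
  (∑ p ∈ Finset.univ.filter (fun p : Fin n × Fin n => p.1 < p.2),
      (kendall (D p.1) (D p.2) : ℝ)) / (n.choose 2 : ℝ)

/-- Second moment of the pairwise Kendall tau distances of an `n`-run design. -/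
noncomputable def km2 {m n : ℕ} (D : Fin n → Run m) : ℝ :=
  (∑ p ∈ Finset.univ.filter (fun p : Fin n × Fin n => p.1 < p.2),
      (kendall (D p.1) (D p.2) : ℝ) ^ 2) / (n.choose 2 : ℝ)

/-- The PWO factor `z_ab(x)` as a real number. -/
def zab {m : ℕ} (x : Run m) (p : Fin m × Fin m) : ℝ :=
  if x.symm p.1 < x.symm p.2 then 1 else -1

/-- The PWO model matrix of a design: a row `(1, z_ab(x_i) : a < b)` for each run. -/
def pwoX {m : ℕ} {ι : Type} (D : ι → Run m) :
    Matrix ι (Option {p : Fin m × Fin m // p.1 < p.2}) ℝ :=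
  fun i c => match c with
    | none => 1
    | some p => zab (D i) p.1

/-!
Put `G = X Xᵀ`. Then `tr (M²) = tr (G²) = ∑ᵢⱼ Gᵢⱼ²`, and since `z_ab(x) z_ab(y) = -1` exactly on the
pairs where `x` and `y` disagree, `Gᵢⱼ = 1 + m(m-1)/2 - 2 k(xᵢ, xⱼ)`. Expanding the square, the sums of
`k` and `k²` over ordered pairs are twice those over the `binom(n,2)` unordered pairs, i.e.
`n(n-1) k_ave` and `n(n-1) k_m2`.
-/

open Finset Matrix

theorem sum_sum_eq_two_mul_sum_lt {ι R : Type*} [Fintype ι] [LinearOrder ι] [NonAssocSemiring R]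
    (f : ι → ι → R) (hdiag : ∀ i, f i i = 0) (hsymm : ∀ i j, f i j = f j i) :
    ∑ i, ∑ j, f i j = 2 * ∑ p ∈ univ.filter (fun p : ι × ι => p.1 < p.2), f p.1 p.2 := by
  have hsplit : ∀ i j, f i j = (if i < j then f i j else 0) + (if j < i then f j i else 0) := by
    intro i j
    rcases lt_trichotomy i j with h | rfl | h
    · rw [if_pos h, if_neg h.not_gt, add_zero]
    · simp [hdiag]
    · rw [if_neg h.not_gt, if_pos h, zero_add, hsymm]
  rw [sum_filter, Fintype.sum_prod_type, two_mul,
    Fintype.sum_congr _ _ fun i => Fintype.sum_congr _ _ fun j => hsplit i j]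
  simp only [sum_add_distrib]
  rw [Finset.sum_comm (f := fun i j => if j < i then f j i else 0)]

theorem two_mul_card_filter_lt (m : ℕ) :
    2 * ((univ.filter fun p : Fin m × Fin m => p.1 < p.2).card : ℝ) = m * (m - 1) := by
  have h := sum_sum_eq_two_mul_sum_lt (fun i j : Fin m => (1 : ℝ) - if i = j then 1 else 0)
    (fun i => by simp) (fun i j => by simp only [eq_comm])
  rw [sum_congr (s₁ := univ.filter _) rfl
    fun p hp => by rw [if_neg (mem_filter.1 hp).2.ne, sub_zero]] at h
  simpa [sum_sub_distrib, mul_sub] using h.symm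

theorem mul_sum_lt_div_choose_two {n : ℕ} (f : Fin n → Fin n → ℝ) (hdiag : ∀ i, f i i = 0)
    (hsymm : ∀ i j, f i j = f j i) :
    (n : ℝ) * (n - 1) *
        ((∑ p ∈ univ.filter (fun p : Fin n × Fin n => p.1 < p.2), f p.1 p.2) / n.choose 2) =
      ∑ i, ∑ j, f i j := by
  rw [sum_sum_eq_two_mul_sum_lt f hdiag hsymm, Nat.cast_choose_two]
  -- for `n < 2` the division is by `0`, harmless because the sum is empty
  rcases lt_or_ge n 2 with hn | hn
  · have hempty : univ.filter (fun p : Fin n × Fin n => p.1 < p.2) = ∅ :=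
      filter_eq_empty_iff.2 fun p _ => by rw [Fin.lt_def]; omega
    simp [hempty]
  · have hn' : (n : ℝ) - 1 ≠ 0 := by
      have : (2 : ℝ) ≤ n := by exact_mod_cast hn
      linarith
    field_simp

theorem zab_mul_zab {m : ℕ} (x y : Run m) {p : Fin m × Fin m} (hp : p.1 ≠ p.2) :
    zab x p * zab y p =
      1 - 2 * if (((x.symm p.1 : ℕ) : ℤ) - ((x.symm p.2 : ℕ) : ℤ)) *
        (((y.symm p.1 : ℕ) : ℤ) - ((y.symm p.2 : ℕ) : ℤ)) < 0 then 1 else 0 := by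
  have hx : ((x.symm p.1 : ℕ) : ℤ) ≠ x.symm p.2 := by simpa [Fin.val_ne_iff] using hp
  have hy : ((y.symm p.1 : ℕ) : ℤ) ≠ y.symm p.2 := by simpa [Fin.val_ne_iff] using hp
  simp only [zab, Fin.lt_def, ← Int.ofNat_lt]
  generalize ((x.symm p.1 : ℕ) : ℤ) = a₁, ((x.symm p.2 : ℕ) : ℤ) = a₂ at hx ⊢
  generalize ((y.symm p.1 : ℕ) : ℤ) = b₁, ((y.symm p.2 : ℕ) : ℤ) = b₂ at hy ⊢
  rcases hx.lt_or_gt with ha | ha <;> rcases hy.lt_or_gt with hb | hb <;>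
    norm_num [ha, hb, ha.not_gt, hb.not_gt, mul_neg_iff, sub_neg]

theorem kendall_self {m : ℕ} (x : Run m) : kendall x x = 0 := by
  rw [kendall, card_eq_zero, filter_eq_empty_iff]
  exact fun p _ h => (mul_self_nonneg _).not_gt h.2

theorem kendall_comm {m : ℕ} (x y : Run m) : kendall x y = kendall y x := by
  simp only [kendall, mul_comm]

theorem pwoX_mul_transpose_apply {m : ℕ} {ι : Type} (D : ι → Run m) (i j : ι) :
    (pwoX D * (pwoX D)ᵀ) i j = 1 + m * (m - 1) / 2 - 2 * kendall (D i) (D j) := by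
  have hpairs : ∑ p : {p : Fin m × Fin m // p.1 < p.2}, zab (D i) p.1 * zab (D j) p.1 =
      ∑ p ∈ univ.filter (fun p : Fin m × Fin m => p.1 < p.2), zab (D i) p * zab (D j) p :=
    (sum_subtype _ (fun _ => by simp) fun p => zab (D i) p * zab (D j) p).symm
  rw [mul_apply, Fintype.sum_option]
  simp only [pwoX, transpose_apply, mul_one, hpairs]
  rw [sum_congr rfl fun p hp => zab_mul_zab (D i) (D j) (mem_filter.1 hp).2.ne,
    sum_sub_distrib, ← mul_sum, sum_boole, filter_filter, sum_const, nsmul_one,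
    ← two_mul_card_filter_lt, kendall]
  ring

theorem trace_transpose_mul_self_mul_self {m n R : Type*} [Fintype m] [Fintype n] [CommRing R]
    (A : Matrix m n R) : trace (Aᵀ * A * (Aᵀ * A)) = ∑ i, ∑ j, (A * Aᵀ) i j ^ 2 := by
  have hcycle : trace (Aᵀ * A * (Aᵀ * A)) = trace (A * Aᵀ * (A * Aᵀ)) := by
    rw [Matrix.mul_assoc, trace_mul_comm]
    simp only [Matrix.mul_assoc]
  have hsymm : (A * Aᵀ).IsSymm := transpose_mul _ _
  rw [hcycle]
  exact sum_congr rfl fun i _ => sum_congr rfl fun j _ => by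
    show (A * Aᵀ) i j * (A * Aᵀ) j i = (A * Aᵀ) i j ^ 2
    rw [hsymm.apply i j, sq]

open Matrix in
theorem stmt2_general {m n : ℕ} (D : Fin n → Run m) :
    Matrix.trace ((pwoX D)ᵀ * pwoX D * ((pwoX D)ᵀ * pwoX D)) =
      4 * (n : ℝ) * ((n : ℝ) - 1) * km2 D -
        (2 * (m : ℝ) * ((m : ℝ) - 1) + 4) * (n : ℝ) * ((n : ℝ) - 1) * kave D +
        (n : ℝ) ^ 2 * ((m : ℝ) ^ 2 - (m : ℝ) + 2) ^ 2 / 4 := by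
  have hkave := mul_sum_lt_div_choose_two (fun i j => (kendall (D i) (D j) : ℝ))
    (fun i => by simp [kendall_self]) (fun i j => by rw [kendall_comm])
  have hkm2 := mul_sum_lt_div_choose_two (fun i j => (kendall (D i) (D j) : ℝ) ^ 2)
    (fun i => by simp [kendall_self]) (fun i j => by rw [kendall_comm])
  beta_reduce at hkave hkm2
  rw [trace_transpose_mul_self_mul_self, kave, km2]
  simp only [pwoX_mul_transpose_apply, sub_sq, sum_add_distrib, sum_sub_distrib, mul_pow,
    ← mul_sum, sum_const, card_univ, Fintype.card_fin, nsmul_eq_mul]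
  linear_combination (2 * (m : ℝ) * (m - 1) + 4) * hkave - 4 * hkm2

open Matrix in
theorem stmt2 {m n : ℕ} (hm : 2 ≤ m) (D : Fin n → Run m) :
    Matrix.trace ((pwoX D)ᵀ * pwoX D * ((pwoX D)ᵀ * pwoX D)) =
      4 * (n : ℝ) * ((n : ℝ) - 1) * km2 D -
        (2 * (m : ℝ) * ((m : ℝ) - 1) + 4) * (n : ℝ) * ((n : ℝ) - 1) * kave D +
        (n : ℝ) ^ 2 * ((m : ℝ) ^ 2 - (m : ℝ) + 2) ^ 2 / 4 :=
  stmt2_general D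
end

section
/- Let D_full be the full OofA design consisting of all m! permutations of {0,1,…,m−1}, and let M_full = X_fullᵀ X_full be the moment matrix of its PWO model matrix. Then tr(M_full²)/(m!)² = (2m³ + 3m² − 5m + 18)/18. -/
/-!
Write `M = XᵀX`. Its intercept row is `(m!, 0, …, 0)`, and on pairs it is the Gram matrix
`G p q = ∑_σ z_p(σ) z_q(σ)` of the full design. Relabelling components by a transposition is a
bijection of the design, which forces `∑_σ z_ab(σ) = 0` and `G p q = 0` for disjoint pairs. For
pairs sharing one component, three distinct positions always have two extreme ones and a middle one,
which gives `G (a,b) (a,e) = m!/3`. So every row of `G` has squared norm `m!² (1 + 2(m-2)/9)`,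
and there are `m(m-1)/2` rows.
-/

open Finset Nat

theorem sum_prod_eq_two_nsmul_sum_lt {α M : Type*} [Fintype α] [LinearOrder α]
    [AddCommMonoid M] (F : α × α → M) (hsymm : ∀ a b, F (a, b) = F (b, a))
    (hdiag : ∀ a, F (a, a) = 0) :
    ∑ p, F p = 2 • ∑ q : {p : α × α // p.1 < p.2}, F q := by
  have hsplit (p : α × α) :
      F p = (if p.1 < p.2 then F p else 0) + (if p.2 < p.1 then F p else 0) := by
    obtain ⟨a, b⟩ := p
    rcases lt_trichotomy a b with h | rfl | h
    · simp [h, h.not_gt]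
    · simp [hdiag]
    · simp [h, h.not_gt]
  have hswap : ∑ p : α × α, (if p.2 < p.1 then F p else 0) =
      ∑ p : α × α, (if p.1 < p.2 then F p else 0) := by
    rw [← (Equiv.prodComm α α).sum_comp]
    exact sum_congr rfl fun ⟨a, b⟩ _ => by simp [hsymm b a]
  rw [sum_congr rfl fun p _ => hsplit p, sum_add_distrib, hswap, two_nsmul, ← sum_filter,
    sum_subtype (p := fun q : α × α => q.1 < q.2) _ (by simp) F]

section FullDesign

variable {m : ℕ}

theorem zab_mul_self (x : Run m) (p : Fin m × Fin m) : zab x p * zab x p = 1 := by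
  unfold zab; split_ifs <;> norm_num

theorem zab_self (x : Run m) (a : Fin m) : zab x (a, a) = -1 := by
  simp [zab]

theorem zab_swap (x : Run m) {a b : Fin m} (h : a ≠ b) : zab x (b, a) = -zab x (a, b) := by
  have : x.symm a ≠ x.symm b := x.symm.injective.ne h
  unfold zab
  rcases this.lt_or_gt with h' | h' <;> simp [h', h'.not_gt]

theorem zab_mul_relabel (τ σ : Run m) (a b : Fin m) :
    zab (τ * σ) (τ a, τ b) = zab σ (a, b) := by
  simp [zab, Equiv.Perm.mul_def]

theorem sum_zab_eq_zero {a b : Fin m} (h : a ≠ b) : ∑ σ : Run m, zab σ (a, b) = 0 := by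
  have hrelabel (σ : Run m) : zab (Equiv.swap a b * σ) (b, a) = zab σ (a, b) := by
    simpa using zab_mul_relabel (Equiv.swap a b) σ a b
  have : ∑ σ : Run m, zab σ (a, b) = -∑ σ : Run m, zab σ (a, b) := calc
    _ = ∑ σ : Run m, zab (Equiv.swap a b * σ) (b, a) := by simp only [hrelabel]
    _ = ∑ σ : Run m, zab σ (b, a) :=
      Equiv.sum_comp (Equiv.mulLeft (Equiv.swap a b)) (zab · (b, a))
    _ = _ := by simp only [zab_swap _ h, sum_neg_distrib]
  linarith

def fullMoment (m : ℕ) (p q : Fin m × Fin m) : ℝ := ∑ σ : Run m, zab σ p * zab σ q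

theorem fullMoment_comm (p q : Fin m × Fin m) : fullMoment m p q = fullMoment m q p := by
  simp only [fullMoment, mul_comm]

theorem fullMoment_self (p : Fin m × Fin m) : fullMoment m p p = m ! := by
  simp [fullMoment, zab_mul_self, Fintype.card_perm]

theorem fullMoment_swap_left {a b : Fin m} (h : a ≠ b) (q : Fin m × Fin m) :
    fullMoment m (b, a) q = -fullMoment m (a, b) q := by
  simp [fullMoment, zab_swap _ h]

theorem fullMoment_swap_right {c d : Fin m} (h : c ≠ d) (p : Fin m × Fin m) :
    fullMoment m p (d, c) = -fullMoment m p (c, d) := by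
  rw [fullMoment_comm, fullMoment_swap_left h, fullMoment_comm]

theorem fullMoment_diag_right {a b : Fin m} (h : a ≠ b) (c : Fin m) :
    fullMoment m (a, b) (c, c) = 0 := by
  simp [fullMoment, zab_self, sum_zab_eq_zero h]

theorem fullMoment_relabel (τ : Run m) (a b c d : Fin m) :
    fullMoment m (τ a, τ b) (τ c, τ d) = fullMoment m (a, b) (c, d) := by
  rw [fullMoment, ← Equiv.sum_comp (Equiv.mulLeft τ)]
  simp only [Equiv.coe_mulLeft, zab_mul_relabel, fullMoment]

theorem fullMoment_of_disjoint {a b c d : Fin m} (hab : a ≠ b) (hca : c ≠ a) (hcb : c ≠ b)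
    (hda : d ≠ a) (hdb : d ≠ b) : fullMoment m (a, b) (c, d) = 0 := by
  have h := fullMoment_relabel (Equiv.swap a b) a b c d
  rw [Equiv.swap_apply_left, Equiv.swap_apply_right, Equiv.swap_apply_of_ne_of_ne hca hcb,
    Equiv.swap_apply_of_ne_of_ne hda hdb, fullMoment_swap_left hab] at h
  linarith

theorem ite_lt_mul_ite_lt_add_cyclic {α : Type*} [LinearOrder α] {u v w : α} (huv : u ≠ v)
    (huw : u ≠ w) (hvw : v ≠ w) :
    ((if u < v then (1 : ℝ) else -1) * (if u < w then 1 else -1)) +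
    ((if v < u then (1 : ℝ) else -1) * (if v < w then 1 else -1)) +
    ((if w < v then (1 : ℝ) else -1) * (if w < u then 1 else -1)) = 1 := by
  split_ifs <;> first | order | norm_num

theorem fullMoment_apex {a b e : Fin m} (hab : a ≠ b) (hae : a ≠ e) (hbe : b ≠ e) :
    fullMoment m (a, b) (a, e) = m ! / 3 := by
  have hb : fullMoment m (b, a) (b, e) = fullMoment m (a, b) (a, e) := by
    simpa [Equiv.swap_apply_of_ne_of_ne hae.symm hbe.symm] using
      fullMoment_relabel (Equiv.swap a b) a b a e
  have he : fullMoment m (e, b) (e, a) = fullMoment m (a, b) (a, e) := by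
    simpa [Equiv.swap_apply_of_ne_of_ne hab.symm hbe] using
      fullMoment_relabel (Equiv.swap a e) a b a e
  have hsum : fullMoment m (a, b) (a, e) + fullMoment m (b, a) (b, e) +
      fullMoment m (e, b) (e, a) = m ! := by
    have hpoint (σ : Run m) : zab σ (a, b) * zab σ (a, e) + zab σ (b, a) * zab σ (b, e) +
        zab σ (e, b) * zab σ (e, a) = 1 :=
      ite_lt_mul_ite_lt_add_cyclic (σ.symm.injective.ne hab) (σ.symm.injective.ne hae)
        (σ.symm.injective.ne hbe)
    simp [fullMoment, ← sum_add_distrib, hpoint, Fintype.card_perm]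
  linarith

theorem sq_fullMoment_of_share {a b c e : Fin m} (hab : a ≠ b) (hc : c = a ∨ c = b)
    (hea : e ≠ a) (heb : e ≠ b) :
    fullMoment m (a, b) (c, e) ^ 2 = (m ! : ℝ) ^ 2 / 9 ∧
      fullMoment m (a, b) (e, c) ^ 2 = (m ! : ℝ) ^ 2 / 9 := by
  have hce : c ≠ e := by rintro rfl; tauto
  have hshare : fullMoment m (a, b) (c, e) ^ 2 = (m ! : ℝ) ^ 2 / 9 := by
    rcases hc with rfl | rfl
    · rw [fullMoment_apex hab hea.symm heb.symm]; ring
    · rw [← neg_sq, ← fullMoment_swap_left hab, fullMoment_apex hab.symm heb.symm hea.symm]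
      ring
  exact ⟨hshare, by rw [fullMoment_swap_right hce, neg_sq, hshare]⟩

theorem sum_sq_fullMoment {a b : Fin m} (hab : a ≠ b) :
    ∑ c, ∑ d, fullMoment m (a, b) (c, d) ^ 2 = (m ! : ℝ) ^ 2 * (4 * m + 10) / 9 := by
  set s : Finset (Fin m) := {a, b}
  have hcard : (#sᶜ : ℝ) = m - 2 := by
    have := card_add_card_compl s
    rw [card_pair hab, Fintype.card_fin] at this
    have hreal : (2 + #sᶜ : ℝ) = m := by exact_mod_cast this
    linarith
  have hsplit (f : Fin m → ℝ) : ∑ x, f x = f a + f b + ∑ x ∈ sᶜ, f x := by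
    rw [← sum_add_sum_compl s, sum_pair hab]
  have hmem {e : Fin m} (he : e ∈ sᶜ) : e ≠ a ∧ e ≠ b := by simpa [s, not_or] using he
  have hrow {c : Fin m} (hc : c = a ∨ c = b) :
      ∑ d ∈ sᶜ, fullMoment m (a, b) (c, d) ^ 2 = (m - 2) * ((m ! : ℝ) ^ 2 / 9) := by
    rw [sum_congr rfl fun e he => (sq_fullMoment_of_share hab hc (hmem he).1 (hmem he).2).1,
      sum_const, nsmul_eq_mul, hcard]
  have hrest : ∑ c ∈ sᶜ, ∑ d, fullMoment m (a, b) (c, d) ^ 2 =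
      (m - 2) * (2 * ((m ! : ℝ) ^ 2 / 9)) := by
    rw [← hcard, ← nsmul_eq_mul, ← sum_const]
    refine sum_congr rfl fun c hc => ?_
    obtain ⟨hca, hcb⟩ := hmem hc
    rw [hsplit, (sq_fullMoment_of_share hab (.inl rfl) hca hcb).2,
      (sq_fullMoment_of_share hab (.inr rfl) hca hcb).2,
      sum_congr rfl fun d hd => by rw [fullMoment_of_disjoint hab hca hcb (hmem hd).1 (hmem hd).2]]
    simp only [zero_pow two_ne_zero, sum_const_zero]
    ring
  rw [hsplit, hsplit, hsplit, hrow (.inl rfl), hrow (.inr rfl), hrest, fullMoment_self,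
    fullMoment_swap_right hab, fullMoment_self, fullMoment_diag_right hab,
    fullMoment_diag_right hab]
  ring

theorem sum_sq_fullMoment_lt {a b : Fin m} (hab : a ≠ b) :
    ∑ q : {p : Fin m × Fin m // p.1 < p.2}, fullMoment m (a, b) q ^ 2 =
      (m ! : ℝ) ^ 2 * (2 * m + 5) / 9 := by
  have hsymm (c d : Fin m) : fullMoment m (a, b) (c, d) ^ 2 = fullMoment m (a, b) (d, c) ^ 2 := by
    rcases eq_or_ne c d with rfl | hcd
    · rfl
    · rw [fullMoment_swap_right hcd, neg_sq]
  have h := sum_prod_eq_two_nsmul_sum_lt (fun q => fullMoment m (a, b) q ^ 2) hsymm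
    fun c => by simp [fullMoment_diag_right hab]
  rw [Fintype.sum_prod_type, sum_sq_fullMoment hab, two_nsmul] at h
  linarith

theorem card_lt_pairs_fin (n : ℕ) :
    (Fintype.card {p : Fin n × Fin n // p.1 < p.2} : ℝ) = n * (n - 1) / 2 := by
  rw [Fintype.card_subtype, Fintype.card_product_filter_lt, Fintype.card_fin, cast_choose_two]

open Matrix in
def fullMomentMatrix (m : ℕ) : Matrix (Option {p : Fin m × Fin m // p.1 < p.2})
    (Option {p : Fin m × Fin m // p.1 < p.2}) ℝ :=
  (pwoX (fun σ : Run m => σ))ᵀ * pwoX (fun σ : Run m => σ)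

@[simp]
theorem fullMomentMatrix_none_none : fullMomentMatrix m none none = m ! := by
  simp [fullMomentMatrix, Matrix.mul_apply, pwoX, Fintype.card_perm]

@[simp]
theorem fullMomentMatrix_none_some (q : {p : Fin m × Fin m // p.1 < p.2}) :
    fullMomentMatrix m none (some q) = 0 := by
  simp [fullMomentMatrix, Matrix.mul_apply, pwoX, sum_zab_eq_zero q.2.ne]

@[simp]
theorem fullMomentMatrix_some_none (p : {p : Fin m × Fin m // p.1 < p.2}) :
    fullMomentMatrix m (some p) none = 0 := by
  simp [fullMomentMatrix, Matrix.mul_apply, pwoX, sum_zab_eq_zero p.2.ne]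

@[simp]
theorem fullMomentMatrix_some_some (p q : {p : Fin m × Fin m // p.1 < p.2}) :
    fullMomentMatrix m (some p) (some q) = fullMoment m p q := by
  simp [fullMomentMatrix, Matrix.mul_apply, pwoX, fullMoment]

theorem trace_fullMomentMatrix_mul_self :
    (fullMomentMatrix m * fullMomentMatrix m).trace =
      (m ! : ℝ) ^ 2 + ∑ p : {p : Fin m × Fin m // p.1 < p.2},
        ∑ q : {p : Fin m × Fin m // p.1 < p.2}, fullMoment m p q ^ 2 := by
  simp [Matrix.trace, Matrix.mul_apply, Fintype.sum_option, sq, fullMoment_comm]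

end FullDesign

open Matrix in
theorem stmt3_general {m : ℕ} :
    Matrix.trace ((pwoX (fun σ : Run m => σ))ᵀ * pwoX (fun σ : Run m => σ) *
        ((pwoX (fun σ : Run m => σ))ᵀ * pwoX (fun σ : Run m => σ))) /
        ((Nat.factorial m : ℝ)) ^ 2 =
      (2 * (m : ℝ) ^ 3 + 3 * (m : ℝ) ^ 2 - 5 * (m : ℝ) + 18) / 18 := by
  change (fullMomentMatrix m * fullMomentMatrix m).trace / _ = _
  have hrow (p : {p : Fin m × Fin m // p.1 < p.2}) :
      ∑ q : {p : Fin m × Fin m // p.1 < p.2}, fullMoment m p q ^ 2 =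
        (m ! : ℝ) ^ 2 * (2 * m + 5) / 9 :=
    sum_sq_fullMoment_lt p.2.ne
  rw [trace_fullMomentMatrix_mul_self, sum_congr rfl fun p _ => hrow p, sum_const,
    Finset.card_univ, nsmul_eq_mul, card_lt_pairs_fin]
  field_simp
  ring

open Matrix in
/-- The full design consists of all `m!` permutations (indexed by `Equiv.Perm (Fin m)` itself). -/
theorem stmt3 {m : ℕ} (hm : 2 ≤ m) :
    Matrix.trace ((pwoX (fun σ : Run m => σ))ᵀ * pwoX (fun σ : Run m => σ) *
        ((pwoX (fun σ : Run m => σ))ᵀ * pwoX (fun σ : Run m => σ))) /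
        ((Nat.factorial m : ℝ)) ^ 2 =
      (2 * (m : ℝ) ^ 3 + 3 * (m : ℝ) ^ 2 - 5 * (m : ℝ) + 18) / 18 :=
  stmt3_general
end

section
/- For any n-run OofA design D on m components with n ≥ 2, the first two moments of its Kendall tau distance distribution satisfy k_{m2}(D) ≥ ((m²−m+2)/2) k_ave(D) − (n m/(144(n−1))) (9m³ − 22m² + 39m − 26). -/
open Finset

def Pr (m : ℕ) : Finset (Fin m × Fin m) := Finset.univ.filter fun p => p.1 < p.2

noncomputable def Fs {m : ℕ} (x : Run m) (p : Fin m × Fin m) : ℝ :=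
  if x.symm p.1 < x.symm p.2 then 1 else -1

lemma Fs_mul_self {m : ℕ} (x : Run m) (p : Fin m × Fin m) : Fs x p * Fs x p = 1 := by
  unfold Fs; split_ifs <;> norm_num

lemma kendall_cast {m : ℕ} (x y : Run m) :
    (kendall x y : ℝ) = ∑ p ∈ Pr m, (1 - Fs x p * Fs y p) / 2 := by
  unfold kendall Pr
  rw [← Finset.filter_filter, Finset.card_filter]
  push_cast
  refine Finset.sum_congr rfl fun p hp => ?_
  simp only [Finset.mem_filter] at hp
  have hab : p.1 ≠ p.2 := ne_of_lt hp.2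
  have hx : (x.symm p.1 : ℕ) ≠ (x.symm p.2 : ℕ) := by
    simp only [ne_eq, Fin.val_eq_val, EmbeddingLike.apply_eq_iff_eq]; exact hab
  have hy : (y.symm p.1 : ℕ) ≠ (y.symm p.2 : ℕ) := by
    simp only [ne_eq, Fin.val_eq_val, EmbeddingLike.apply_eq_iff_eq]; exact hab
  unfold Fs
  set A : ℤ := ((x.symm p.1 : ℕ) : ℤ) - ((x.symm p.2 : ℕ) : ℤ) with hA
  set B : ℤ := ((y.symm p.1 : ℕ) : ℤ) - ((y.symm p.2 : ℕ) : ℤ) with hB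
  by_cases h1 : x.symm p.1 < x.symm p.2 <;> by_cases h2 : y.symm p.1 < y.symm p.2 <;>
    rw [Fin.lt_def] at h1 h2 <;>
    simp only [h1, h2, Fin.lt_def, if_true, if_false]
  · have : ¬ (A * B < 0) := by
      have ha : A < 0 := by omega
      have hb : B < 0 := by omega
      nlinarith
    rw [if_neg this]; norm_num
  · have : A * B < 0 := by
      have ha : A < 0 := by omega
      have hb : 0 < B := by omega
      nlinarith
    rw [if_pos this]; norm_num
  · have : A * B < 0 := by
      have ha : 0 < A := by omega
      have hb : B < 0 := by omega
      nlinarith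
    rw [if_pos this]; norm_num
  · have : ¬ (A * B < 0) := by
      have ha : 0 < A := by omega
      have hb : 0 < B := by omega
      nlinarith
    rw [if_neg this]; norm_num


lemma sum_pairs {n : ℕ} (g : Fin n → Fin n → ℝ) (hsym : ∀ i j, g i j = g j i)
    (hdiag : ∀ i, g i i = 0) :
    ∑ i, ∑ j, g i j =
      2 * ∑ p ∈ Finset.univ.filter (fun p : Fin n × Fin n => p.1 < p.2), g p.1 p.2 := by
  have h0 : ∑ i, ∑ j, g i j = ∑ p ∈ (univ ×ˢ univ : Finset (Fin n × Fin n)), g p.1 p.2 :=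
    (Finset.sum_product' _ _ _).symm
  have h1 := Finset.sum_filter_add_sum_filter_not (univ ×ˢ univ : Finset (Fin n × Fin n))
    (fun p => p.1 < p.2) (fun p => g p.1 p.2)
  have h2 := Finset.sum_filter_add_sum_filter_not
    ((univ ×ˢ univ : Finset (Fin n × Fin n)).filter (fun p => ¬ p.1 < p.2))
    (fun p => p.2 < p.1) (fun p => g p.1 p.2)
  have h3 : ∑ p ∈ (((univ ×ˢ univ : Finset (Fin n × Fin n)).filter (fun p => ¬ p.1 < p.2)).filter
      (fun p => ¬ p.2 < p.1)), g p.1 p.2 = 0 := by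
    apply Finset.sum_eq_zero
    intro p hp
    simp only [Finset.mem_filter] at hp
    have : p.1 = p.2 := le_antisymm (not_lt.1 hp.2) (not_lt.1 hp.1.2)
    rw [this, hdiag]
  have h4 : (((univ ×ˢ univ : Finset (Fin n × Fin n)).filter (fun p => ¬ p.1 < p.2)).filter
      (fun p => p.2 < p.1)) = (univ ×ˢ univ : Finset (Fin n × Fin n)).filter (fun p => p.2 < p.1) := by
    rw [Finset.filter_filter]
    apply Finset.filter_congr
    intro p _
    constructor
    · exact fun h => h.2
    · exact fun h => ⟨not_lt.2 h.le, h⟩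
  have h5 : ∑ p ∈ (univ ×ˢ univ : Finset (Fin n × Fin n)).filter (fun p => p.2 < p.1), g p.1 p.2
      = ∑ p ∈ (univ ×ˢ univ : Finset (Fin n × Fin n)).filter (fun p => p.1 < p.2), g p.1 p.2 := by
    apply Finset.sum_nbij' (i := Prod.swap) (j := Prod.swap)
    · intro p hp; simp only [Finset.mem_filter] at *; exact ⟨by simp, hp.2⟩
    · intro p hp; simp only [Finset.mem_filter] at *; exact ⟨by simp, hp.2⟩
    · intro p _; simp
    · intro p _; simp
    · intro p _; exact hsym p.1 p.2
  rw [h0, ← h1, ← h2, h3, h4, h5, Finset.univ_product_univ]; ring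

lemma swap_lin {n : ℕ} {α : Type*} (s : Finset α) (g : Fin n → α → ℝ) :
    ∑ i, ∑ j, (∑ p ∈ s, g i p * g j p) = ∑ p ∈ s, (∑ i, g i p) ^ 2 := by
  have : ∀ i : Fin n, ∑ j, (∑ p ∈ s, g i p * g j p) = ∑ p ∈ s, g i p * (∑ j, g j p) := by
    intro i
    rw [Finset.sum_comm]
    exact Finset.sum_congr rfl fun p _ => by rw [Finset.mul_sum]
  simp_rw [this]
  rw [Finset.sum_comm]
  exact Finset.sum_congr rfl fun p _ => by rw [sq, ← Finset.sum_mul]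

lemma swap_sq {n : ℕ} {α : Type*} (s : Finset α) (g : Fin n → α → ℝ) :
    ∑ i, ∑ j, (∑ p ∈ s, g i p * g j p) ^ 2
      = ∑ p ∈ s, ∑ q ∈ s, (∑ i, g i p * g i q) ^ 2 := by
  have e1 : ∀ i j : Fin n, (∑ p ∈ s, g i p * g j p) ^ 2
      = ∑ p ∈ s, ∑ q ∈ s, (g i p * g i q) * (g j p * g j q) := by
    intro i j
    rw [sq, Finset.sum_mul_sum]
    exact Finset.sum_congr rfl fun p _ => Finset.sum_congr rfl fun q _ => by ring
  have e2 : ∀ p q, (∑ i : Fin n, g i p * g i q) ^ 2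
      = ∑ i : Fin n, ∑ j : Fin n, (g i p * g i q) * (g j p * g j q) := by
    intro p q
    rw [sq, Finset.sum_mul_sum]
  simp_rw [e1, e2]
  calc ∑ i : Fin n, ∑ j : Fin n, ∑ p ∈ s, ∑ q ∈ s, (g i p * g i q) * (g j p * g j q)
      = ∑ i : Fin n, ∑ p ∈ s, ∑ j : Fin n, ∑ q ∈ s, (g i p * g i q) * (g j p * g j q) :=
        Finset.sum_congr rfl fun i _ => Finset.sum_comm
    _ = ∑ p ∈ s, ∑ i : Fin n, ∑ j : Fin n, ∑ q ∈ s, (g i p * g i q) * (g j p * g j q) :=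
        Finset.sum_comm
    _ = ∑ p ∈ s, ∑ i : Fin n, ∑ q ∈ s, ∑ j : Fin n, (g i p * g i q) * (g j p * g j q) :=
        Finset.sum_congr rfl fun p _ => Finset.sum_congr rfl fun i _ => Finset.sum_comm
    _ = ∑ p ∈ s, ∑ q ∈ s, ∑ i : Fin n, ∑ j : Fin n, (g i p * g i q) * (g j p * g j q) :=
        Finset.sum_congr rfl fun p _ => Finset.sum_comm


-- generic: number of increasing pairs in s × s
lemma card_lt_pairs {α : Type*} [LinearOrder α] [DecidableEq α] (s : Finset α) :
    2 * ((s ×ˢ s).filter (fun p => p.1 < p.2)).card = s.card * s.card - s.card := by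
  have h1 := Finset.card_filter_add_card_filter_not
    (s := s ×ˢ s) (p := fun p => p.1 < p.2)
  have h2 := Finset.card_filter_add_card_filter_not
    (s := (s ×ˢ s).filter (fun p => ¬ p.1 < p.2)) (p := fun p => p.2 < p.1)
  have h4 : ((s ×ˢ s).filter (fun p => ¬ p.1 < p.2)).filter (fun p => p.2 < p.1)
      = (s ×ˢ s).filter (fun p => p.2 < p.1) := by
    rw [Finset.filter_filter]
    apply Finset.filter_congr
    intro p _
    constructor
    · exact fun h => h.2
    · exact fun h => ⟨not_lt.2 h.le, h⟩
  have h3 : ((s ×ˢ s).filter (fun p => ¬ p.1 < p.2)).filter (fun p => ¬ p.2 < p.1)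
      = s.image (fun a => (a, a)) := by
    ext p
    simp only [Finset.mem_filter, Finset.mem_image, Finset.mem_product, not_lt]
    constructor
    · rintro ⟨⟨⟨hp1, hp2⟩, hle⟩, hle'⟩
      exact ⟨p.1, hp1, by simp [Prod.ext_iff, le_antisymm hle' hle]⟩
    · rintro ⟨a, ha, rfl⟩
      exact ⟨⟨⟨ha, ha⟩, le_refl _⟩, le_refl _⟩
  have h5 : ((s ×ˢ s).filter (fun p => p.2 < p.1)).card
      = ((s ×ˢ s).filter (fun p => p.1 < p.2)).card := by
    apply Finset.card_nbij' (i := Prod.swap) (j := Prod.swap)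
    · intro p hp; simp only [Finset.mem_coe, Finset.mem_filter, Finset.mem_product] at *
      exact ⟨⟨hp.1.2, hp.1.1⟩, hp.2⟩
    · intro p hp; simp only [Finset.mem_coe, Finset.mem_filter, Finset.mem_product] at *
      exact ⟨⟨hp.1.2, hp.1.1⟩, hp.2⟩
    · intro p _; simp
    · intro p _; simp
  have h6 : (s.image (fun a => (a, a))).card = s.card :=
    Finset.card_image_of_injective _ (fun a b h => (Prod.mk.injEq _ _ _ _ ▸ h).1)
  have h7 : (s ×ˢ s).card = s.card * s.card := by rw [Finset.card_product]
  rw [h4, h3] at h2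
  omega

lemma card_Pr (m : ℕ) :
    2 * ((Finset.univ.filter fun p : Fin m × Fin m => p.1 < p.2)).card = m * m - m := by
  have := card_lt_pairs (Finset.univ : Finset (Fin m))
  rwa [Finset.univ_product_univ, Finset.card_univ, Fintype.card_fin] at this

lemma sum_mul_pred (m : ℕ) : 3 * ∑ c ∈ Finset.range m, c * (c - 1) = m * (m - 1) * (m - 2) := by
  induction m with
  | zero => simp
  | succ k ih =>
    rw [Finset.sum_range_succ, Nat.mul_add, ih]
    rcases k with _ | j
    · simp
    · rcases j with _ | i
      · simp
      · simp only [Nat.add_sub_cancel]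
        have h1 : i + 1 + 1 - 2 = i := by omega
        have h2 : i + 1 + 1 + 1 - 2 = i + 1 := by omega
        rw [h1, h2]
        ring

def Tr (m : ℕ) : Finset (Fin m × Fin m × Fin m) :=
  Finset.univ.filter fun t => t.1 < t.2.1 ∧ t.2.1 < t.2.2

lemma card_Tr (m : ℕ) : 6 * (Tr m).card = m * (m - 1) * (m - 2) := by
  have key : (Tr m).card = ∑ c : Fin m,
      ((Finset.Iio c ×ˢ Finset.Iio c).filter (fun p : Fin m × Fin m => p.1 < p.2)).card := by
    rw [Finset.card_eq_sum_card_fiberwise (f := fun t : Fin m × Fin m × Fin m => t.2.2)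
      (t := Finset.univ) (fun _ _ => Finset.mem_univ _)]
    refine Finset.sum_congr rfl fun c _ => ?_
    apply Finset.card_nbij' (i := fun t => (t.1, t.2.1)) (j := fun p => (p.1, p.2, c))
    · intro t ht
      simp only [Tr, Finset.mem_coe, Finset.mem_filter, Finset.mem_univ, true_and,
        Finset.mem_product, Finset.mem_Iio] at *
      obtain ⟨⟨h1, h2⟩, h3⟩ := ht
      subst h3
      exact ⟨⟨h1.trans h2, h2⟩, h1⟩
    · intro p hp
      simp only [Tr, Finset.mem_coe, Finset.mem_filter, Finset.mem_univ, true_and,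
        Finset.mem_product, Finset.mem_Iio] at *
      exact ⟨⟨hp.2, hp.1.2⟩, trivial⟩
    · intro t ht
      simp only [Tr, Finset.mem_coe, Finset.mem_filter] at ht
      obtain ⟨_, h3⟩ := ht
      simp [← h3]
    · intro p _
      rfl
  have step : ∀ c : Fin m, 2 * ((Finset.Iio c ×ˢ Finset.Iio c).filter
      (fun p : Fin m × Fin m => p.1 < p.2)).card = (c : ℕ) * ((c : ℕ) - 1) := by
    intro c
    rw [card_lt_pairs, Fin.card_Iio]
    rcases h : (c : ℕ) with _ | k
    · simp
    · have : (k+1)*(k+1) = (k+1)*k + (k+1) := by ring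
      simp only [Nat.add_sub_cancel]
      omega
  have h2 : 2 * (Tr m).card = ∑ c : Fin m, (c : ℕ) * ((c : ℕ) - 1) := by
    rw [key, Finset.mul_sum]
    exact Finset.sum_congr rfl fun c _ => step c
  have h3 : ∑ c : Fin m, (c : ℕ) * ((c : ℕ) - 1) = ∑ c ∈ Finset.range m, c * (c - 1) :=
    Fin.sum_univ_eq_sum_range (fun c => c * (c - 1)) m
  have h4 := sum_mul_pred m
  omega

def iota {m : ℕ} (t : Fin m × Fin m × Fin m) (k : Fin 6) :
    (Fin m × Fin m) × (Fin m × Fin m) :=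
  if k.val = 0 then ((t.1, t.2.1), (t.1, t.2.2))
  else if k.val = 1 then ((t.1, t.2.2), (t.1, t.2.1))
  else if k.val = 2 then ((t.1, t.2.1), (t.2.1, t.2.2))
  else if k.val = 3 then ((t.2.1, t.2.2), (t.1, t.2.1))
  else if k.val = 4 then ((t.1, t.2.2), (t.2.1, t.2.2))
  else ((t.2.1, t.2.2), (t.1, t.2.2))

lemma iota_injOn {m : ℕ} (x y : (Fin m × Fin m × Fin m) × Fin 6)
    (hx : x ∈ (Tr m) ×ˢ (Finset.univ : Finset (Fin 6)))
    (hy : y ∈ (Tr m) ×ˢ (Finset.univ : Finset (Fin 6)))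
    (h : iota x.1 x.2 = iota y.1 y.2) : x = y := by
  obtain ⟨⟨a, b, c⟩, k⟩ := x
  obtain ⟨⟨a', b', c'⟩, k'⟩ := y
  simp only [Tr, Finset.mem_product, Finset.mem_filter, Finset.mem_univ, true_and, and_true]
    at hx hy
  obtain ⟨hab, hbc⟩ := hx
  obtain ⟨hab', hbc'⟩ := hy
  rw [Fin.lt_def] at hab hbc hab' hbc'
  fin_cases k <;> fin_cases k' <;>
    simp only [iota, Prod.mk.injEq, Prod.ext_iff, Fin.ext_iff] at h ⊢ <;>
    norm_num at h ⊢ <;> omega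


lemma triple_id {m : ℕ} (x : Run m) (a b c : Fin m) (hab : a < b) (hbc : b < c) :
    Fs x (a, b) * Fs x (a, c) - Fs x (a, b) * Fs x (b, c) + Fs x (a, c) * Fs x (b, c) = 1 := by
  unfold Fs
  have h1 : (x.symm a : ℕ) ≠ (x.symm b : ℕ) := by
    simp only [ne_eq, Fin.val_eq_val, EmbeddingLike.apply_eq_iff_eq]; exact ne_of_lt hab
  have h2 : (x.symm b : ℕ) ≠ (x.symm c : ℕ) := by
    simp only [ne_eq, Fin.val_eq_val, EmbeddingLike.apply_eq_iff_eq]; exact ne_of_lt hbc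
  have h3 : (x.symm a : ℕ) ≠ (x.symm c : ℕ) := by
    simp only [ne_eq, Fin.val_eq_val, EmbeddingLike.apply_eq_iff_eq]
    exact ne_of_lt (hab.trans hbc)
  simp only [Fin.lt_def]
  split_ifs with g1 g2 g3 g3 g2 g3 g3 <;> first | omega | norm_num

lemma Ssymm {m n : ℕ} (D : Fin n → Run m) (p q : Fin m × Fin m) :
    ∑ i, Fs (D i) p * Fs (D i) q = ∑ i, Fs (D i) q * Fs (D i) p :=
  Finset.sum_congr rfl fun i _ => mul_comm _ _

lemma Fs_self_sum {m n : ℕ} (D : Fin n → Run m) (p : Fin m × Fin m) :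
    ∑ i, Fs (D i) p * Fs (D i) p = (n : ℝ) := by
  have : ∀ i : Fin n, Fs (D i) p * Fs (D i) p = 1 := fun i => by
    unfold Fs; split_ifs <;> norm_num
  simp [this]

lemma Sbound {m n : ℕ} (D : Fin n → Run m) :
    ((Pr m).card : ℝ) * (n : ℝ) ^ 2 + ((Tr m).card : ℝ) * (2 / 3) * (n : ℝ) ^ 2
      ≤ ∑ p ∈ Pr m, ∑ q ∈ Pr m, (∑ i, Fs (D i) p * Fs (D i) q) ^ 2 := by
  classical
  set f : (Fin m × Fin m) × (Fin m × Fin m) → ℝ :=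
    fun pq => (∑ i, Fs (D i) pq.1 * Fs (D i) pq.2) ^ 2 with hf
  have hrw : ∑ p ∈ Pr m, ∑ q ∈ Pr m, (∑ i, Fs (D i) p * Fs (D i) q) ^ 2
      = ∑ pq ∈ (Pr m) ×ˢ (Pr m), f pq := (Finset.sum_product' _ _ _).symm
  set Dg : Finset ((Fin m × Fin m) × (Fin m × Fin m)) := (Pr m).image (fun p => (p, p)) with hDg
  set Eg : Finset ((Fin m × Fin m) × (Fin m × Fin m)) :=
    ((Tr m) ×ˢ (Finset.univ : Finset (Fin 6))).image (fun tk => iota tk.1 tk.2) with hEg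
  have hPrmem : ∀ t ∈ Tr m, ∀ k : Fin 6, iota t k ∈ (Pr m) ×ˢ (Pr m) := by
    rintro ⟨a, b, c⟩ ht k
    simp only [Tr, Finset.mem_filter, Finset.mem_univ, true_and] at ht
    obtain ⟨h1, h2⟩ := ht
    have h3 : a < c := h1.trans h2
    fin_cases k <;>
      simp only [iota, Finset.mem_product, Pr, Finset.mem_filter, Finset.mem_univ, true_and] <;>
      norm_num <;> exact ⟨by assumption, by assumption⟩
  have hsub : Dg ∪ Eg ⊆ (Pr m) ×ˢ (Pr m) := by
    intro e he
    rcases Finset.mem_union.1 he with h | h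
    · obtain ⟨p, hp, rfl⟩ := Finset.mem_image.1 h
      exact Finset.mem_product.2 ⟨hp, hp⟩
    · obtain ⟨tk, htk, rfl⟩ := Finset.mem_image.1 h
      obtain ⟨ht, _⟩ := Finset.mem_product.1 htk
      exact hPrmem tk.1 ht tk.2
  have hmain : ∑ e ∈ Dg ∪ Eg, f e ≤ ∑ pq ∈ (Pr m) ×ˢ (Pr m), f pq :=
    Finset.sum_le_sum_of_subset_of_nonneg hsub (fun e _ _ => sq_nonneg _)
  have hdisj : Disjoint Dg Eg := by
    rw [Finset.disjoint_left]
    intro e heD heE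
    obtain ⟨p, _, rfl⟩ := Finset.mem_image.1 heD
    obtain ⟨tk, htk, hiota⟩ := Finset.mem_image.1 heE
    obtain ⟨⟨a, b, c⟩, k⟩ := tk
    obtain ⟨ht, _⟩ := Finset.mem_product.1 htk
    simp only [Tr, Finset.mem_filter, Finset.mem_univ, true_and] at ht
    obtain ⟨h1, h2⟩ := ht
    have h3 : a ≠ b := ne_of_lt h1
    have h4 : b ≠ c := ne_of_lt h2
    have h5 : a ≠ c := ne_of_lt (h1.trans h2)
    rw [Fin.lt_def] at h1 h2
    have h1c : (a:ℕ) < c := by omega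
    fin_cases k <;> simp only [iota, Prod.ext_iff] at hiota <;> norm_num at hiota <;>
      simp only [Fin.ext_iff] at hiota <;> omega
  have hDsum : ∑ e ∈ Dg, f e = ((Pr m).card : ℝ) * (n : ℝ) ^ 2 := by
    rw [hDg, Finset.sum_image (fun x _ y _ h => (Prod.mk.injEq _ _ _ _ ▸ h).1)]
    have : ∀ p ∈ Pr m, f (p, p) = (n : ℝ) ^ 2 := by
      intro p _
      simp only [hf, Fs_self_sum]
    rw [Finset.sum_congr rfl this, Finset.sum_const, nsmul_eq_mul]
  have hEsum : ((Tr m).card : ℝ) * (2 / 3) * (n : ℝ) ^ 2 ≤ ∑ e ∈ Eg, f e := by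
    rw [hEg, Finset.sum_image (fun x hx y hy h => iota_injOn x y hx hy h)]
    rw [Finset.sum_product]
    have hper : ∀ t ∈ Tr m, (2 / 3) * (n : ℝ) ^ 2 ≤ ∑ k : Fin 6, f (iota t k) := by
      rintro ⟨a, b, c⟩ ht
      simp only [Tr, Finset.mem_filter, Finset.mem_univ, true_and] at ht
      obtain ⟨h1, h2⟩ := ht
      rw [Fin.sum_univ_six]
      have e0 : iota ((a,b,c) : Fin m × Fin m × Fin m) 0 = ((a,b),(a,c)) := rfl
      have e1 : iota ((a,b,c) : Fin m × Fin m × Fin m) 1 = ((a,c),(a,b)) := rfl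
      have e2 : iota ((a,b,c) : Fin m × Fin m × Fin m) 2 = ((a,b),(b,c)) := rfl
      have e3 : iota ((a,b,c) : Fin m × Fin m × Fin m) 3 = ((b,c),(a,b)) := rfl
      have e4 : iota ((a,b,c) : Fin m × Fin m × Fin m) 4 = ((a,c),(b,c)) := rfl
      have e5 : iota ((a,b,c) : Fin m × Fin m × Fin m) 5 = ((b,c),(a,c)) := rfl
      rw [e0, e1, e2, e3, e4, e5]
      set X := ∑ i, Fs (D i) (a, b) * Fs (D i) (a, c) with hX
      set Y := ∑ i, Fs (D i) (a, b) * Fs (D i) (b, c) with hY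
      set Z := ∑ i, Fs (D i) (a, c) * Fs (D i) (b, c) with hZ
      have hsum : X - Y + Z = (n : ℝ) := by
        rw [hX, hY, hZ, ← Finset.sum_sub_distrib, ← Finset.sum_add_distrib]
        have : ∀ i : Fin n, Fs (D i) (a, b) * Fs (D i) (a, c)
            - Fs (D i) (a, b) * Fs (D i) (b, c)
            + Fs (D i) (a, c) * Fs (D i) (b, c) = 1 :=
          fun i => triple_id (D i) a b c h1 h2
        simp [this]
      have hfX : f ((a,b),(a,c)) = X ^ 2 := rfl
      have hfX' : f ((a,c),(a,b)) = X ^ 2 := by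
        simp only [hf, hX]; rw [Ssymm]
      have hfY : f ((a,b),(b,c)) = Y ^ 2 := rfl
      have hfY' : f ((b,c),(a,b)) = Y ^ 2 := by
        simp only [hf, hY]; rw [Ssymm]
      have hfZ : f ((a,c),(b,c)) = Z ^ 2 := rfl
      have hfZ' : f ((b,c),(a,c)) = Z ^ 2 := by
        simp only [hf, hZ]; rw [Ssymm]
      rw [hfX, hfX', hfY, hfY', hfZ, hfZ']
      nlinarith [sq_nonneg (X + Y), sq_nonneg (Y + Z), sq_nonneg (X - Z)]
    calc ((Tr m).card : ℝ) * (2 / 3) * (n : ℝ) ^ 2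
        = ∑ _t ∈ Tr m, (2 / 3) * (n : ℝ) ^ 2 := by
          rw [Finset.sum_const, nsmul_eq_mul]; ring
      _ ≤ ∑ t ∈ Tr m, ∑ k : Fin 6, f (iota t k) := Finset.sum_le_sum hper
  calc ((Pr m).card : ℝ) * (n : ℝ) ^ 2 + ((Tr m).card : ℝ) * (2 / 3) * (n : ℝ) ^ 2
      ≤ ∑ e ∈ Dg, f e + ∑ e ∈ Eg, f e := by
        rw [hDsum]; exact add_le_add_right hEsum _
    _ = ∑ e ∈ Dg ∪ Eg, f e := (Finset.sum_union hdisj).symm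
    _ ≤ ∑ pq ∈ (Pr m) ×ˢ (Pr m), f pq := hmain
    _ = ∑ p ∈ Pr m, ∑ q ∈ Pr m, (∑ i, Fs (D i) p * Fs (D i) q) ^ 2 := hrw.symm


set_option maxHeartbeats 2000000 in
theorem stmt4 {m n : ℕ} (hm : 2 ≤ m) (hn : 2 ≤ n) (D : Fin n → Run m) :
    km2 D ≥ (((m : ℝ) ^ 2 - (m : ℝ) + 2) / 2) * kave D -
      ((n : ℝ) * (m : ℝ) / (144 * ((n : ℝ) - 1))) *
        (9 * (m : ℝ) ^ 3 - 22 * (m : ℝ) ^ 2 + 39 * (m : ℝ) - 26) := by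
  classical
  set M : ℝ := (m : ℝ) with hM
  set N : ℝ := (n : ℝ) with hN
  have hM2 : (2 : ℝ) ≤ M := by rw [hM]; exact_mod_cast hm
  have hN2 : (2 : ℝ) ≤ N := by rw [hN]; exact_mod_cast hn
  set K : ℝ := ((Pr m).card : ℝ) with hK
  set Tc : ℝ := ((Tr m).card : ℝ) with hTc
  have hKcast : K = (M ^ 2 - M) / 2 := by
    have h : 2 * (Pr m).card = m * m - m := card_Pr m
    have h2 := congrArg (fun k : ℕ => (k : ℝ)) h
    have hmm : m ≤ m * m := Nat.le_mul_of_pos_left m (by omega)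
    push_cast [Nat.cast_sub hmm] at h2
    rw [hK]; rw [← hM] at h2; nlinarith [h2]
  have hTcast : Tc = (M * (M - 1) * (M - 2)) / 6 := by
    have h := card_Tr m
    have h2 := congrArg (fun k : ℕ => (k : ℝ)) h
    push_cast [Nat.cast_sub (show 1 ≤ m by omega), Nat.cast_sub hm] at h2
    rw [hTc]; rw [← hM] at h2; nlinarith [h2]
  set s : Fin n → Fin n → ℝ := fun i j => ∑ p ∈ Pr m, Fs (D i) p * Fs (D j) p with hs
  have kk_eq : ∀ i j, (kendall (D i) (D j) : ℝ) = (K - s i j) / 2 := by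
    intro i j
    rw [kendall_cast, ← Finset.sum_div, Finset.sum_sub_distrib, Finset.sum_const, nsmul_eq_mul,
      mul_one, hs, hK]
  have s_symm : ∀ i j, s i j = s j i := by
    intro i j
    exact Finset.sum_congr rfl fun p _ => mul_comm _ _
  have s_diag : ∀ i, s i i = K := by
    intro i
    rw [hs, hK]
    simp only [Fs_mul_self]
    rw [Finset.sum_const, nsmul_eq_mul, mul_one]
  set g : Fin n → Fin n → ℝ := fun i j =>
    (kendall (D i) (D j) : ℝ) ^ 2 - (K + 1) * (kendall (D i) (D j) : ℝ) with hg
  have g_symm : ∀ i j, g i j = g j i := by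
    intro i j
    simp only [hg, kk_eq, s_symm i j]
  have g_diag : ∀ i, g i i = 0 := by
    intro i
    simp only [hg, kk_eq, s_diag]
    ring
  have H1 : ∑ i, ∑ j, g i j =
      2 * ∑ p ∈ Finset.univ.filter (fun p : Fin n × Fin n => p.1 < p.2), g p.1 p.2 :=
    sum_pairs g g_symm g_diag
  -- pointwise identity
  have gpt : ∀ i j, g i j = ((s i j + 1) ^ 2 - (K + 1) ^ 2) / 4 := by
    intro i j
    simp only [hg, kk_eq]
    ring
  set A : ℝ := ∑ i, ∑ j, (s i j + 1) ^ 2 with hA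
  have H2 : ∑ i, ∑ j, g i j = (A - N ^ 2 * (K + 1) ^ 2) / 4 := by
    simp_rw [gpt]
    rw [hA]
    have : ∀ i : Fin n, ∑ j, ((s i j + 1) ^ 2 - (K + 1) ^ 2) / 4
        = ((∑ j, (s i j + 1) ^ 2) - N * (K + 1) ^ 2) / 4 := by
      intro i
      rw [← Finset.sum_div, Finset.sum_sub_distrib, Finset.sum_const, Finset.card_univ,
        Fintype.card_fin, nsmul_eq_mul, hN]
    simp_rw [this]
    rw [← Finset.sum_div, Finset.sum_sub_distrib, Finset.sum_const, Finset.card_univ,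
      Fintype.card_fin, nsmul_eq_mul, ← hN]
    ring
  have Aexp : A = (∑ p ∈ Pr m, ∑ q ∈ Pr m, (∑ i, Fs (D i) p * Fs (D i) q) ^ 2)
      + 2 * (∑ p ∈ Pr m, (∑ i, Fs (D i) p) ^ 2) + N ^ 2 := by
    have e1 : ∀ i j : Fin n, (s i j + 1) ^ 2 = s i j ^ 2 + 2 * s i j + 1 := fun i j => by ring
    simp_rw [hA, e1, Finset.sum_add_distrib]
    have t1 : ∑ i : Fin n, ∑ j : Fin n, s i j ^ 2
        = ∑ p ∈ Pr m, ∑ q ∈ Pr m, (∑ i, Fs (D i) p * Fs (D i) q) ^ 2 :=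
      swap_sq (Pr m) (fun i p => Fs (D i) p)
    have t2 : ∑ i : Fin n, ∑ j : Fin n, 2 * s i j = 2 * ∑ p ∈ Pr m, (∑ i, Fs (D i) p) ^ 2 := by
      have := swap_lin (Pr m) (fun i p => Fs (D i) p)
      simp_rw [← Finset.mul_sum]
      rw [hs]
      rw [this]
    have t3 : ∑ _i : Fin n, ∑ _j : Fin n, (1 : ℝ) = N ^ 2 := by
      simp [Finset.card_univ, hN]
      ring
    rw [t1, t2, t3]
  have Abound : A ≥ K * N ^ 2 + Tc * (2 / 3) * N ^ 2 + N ^ 2 := by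
    rw [Aexp]
    have h1 := Sbound D
    rw [← hK, ← hTc, ← hN] at h1
    have h2 : (0 : ℝ) ≤ ∑ p ∈ Pr m, (∑ i, Fs (D i) p) ^ 2 :=
      Finset.sum_nonneg fun p _ => sq_nonneg _
    nlinarith [h1, h2]
  -- put together
  set ch : ℝ := (n.choose 2 : ℝ) with hch
  have hchval : ch = N * (N - 1) / 2 := by
    rw [hch, Nat.cast_choose_two, hN]
  have hchpos : 0 < ch := by rw [hchval]; nlinarith
  set Sk : ℝ := ∑ p ∈ Finset.univ.filter (fun p : Fin n × Fin n => p.1 < p.2),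
      (kendall (D p.1) (D p.2) : ℝ) with hSk
  set Ssq : ℝ := ∑ p ∈ Finset.univ.filter (fun p : Fin n × Fin n => p.1 < p.2),
      (kendall (D p.1) (D p.2) : ℝ) ^ 2 with hSsq
  have Hsplit : ∑ p ∈ Finset.univ.filter (fun p : Fin n × Fin n => p.1 < p.2), g p.1 p.2
      = Ssq - (K + 1) * Sk := by
    rw [hg, hSsq, hSk, Finset.sum_sub_distrib, Finset.mul_sum]
  clear_value M N K Tc s g A ch Sk Ssq
  have key : Ssq - (K + 1) * Sk ≥ (N ^ 2 * (K + 1 + (2 / 3) * Tc - (K + 1) ^ 2)) / 8 := by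
    have := H1
    rw [H2, Hsplit] at this
    linarith [Abound]
  clear H1 H2 Aexp Abound gpt Hsplit kk_eq s_symm s_diag g_symm g_diag hA hg hs hK hTc hM hN
  clear s g
  have hc : (M ^ 2 - M + 2) / 2 = K + 1 := by rw [hKcast]; ring
  have hzero : (N ^ 2 * (K + 1 + (2 / 3) * Tc - (K + 1) ^ 2)) / 8
      + ((N * M / (144 * (N - 1))) * (9 * M ^ 3 - 22 * M ^ 2 + 39 * M - 26)) * ch = 0 := by
    rw [hKcast, hTcast, hchval]
    have hN1 : N - 1 ≠ 0 := by intro hc0; linarith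
    field_simp
    ring
  have key2 : ((M ^ 2 - M + 2) / 2) * Sk
      - ((N * M / (144 * (N - 1))) * (9 * M ^ 3 - 22 * M ^ 2 + 39 * M - 26)) * ch ≤ Ssq := by
    rw [hc]
    nlinarith [key, hzero]
  have h3 : ((M ^ 2 - M + 2) / 2) * (Sk / ch)
      - (N * M / (144 * (N - 1))) * (9 * M ^ 3 - 22 * M ^ 2 + 39 * M - 26)
      = (((M ^ 2 - M + 2) / 2) * Sk
        - ((N * M / (144 * (N - 1))) * (9 * M ^ 3 - 22 * M ^ 2 + 39 * M - 26)) * ch) / ch := by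
    field_simp
  have hfin : ((M ^ 2 - M + 2) / 2) * (Sk / ch)
      - (N * M / (144 * (N - 1))) * (9 * M ^ 3 - 22 * M ^ 2 + 39 * M - 26) ≤ Ssq / ch := by
    rw [h3]
    exact (div_le_div_iff_of_pos_right hchpos).mpr key2
  rw [ge_iff_le]
  unfold km2 kave
  rw [← hch, ← hSk, ← hSsq]
  exact hfin
end

section
/- For any n-run OofA design D on m components with n ≥ 2, the second centralized generalized wordlength quantity satisfies C_2(D) = q(q−1)/2 − (2q(n−1)/n) k_ave(D) + (2(n−1)/n) k_{m2}(D) − m(m−1)(m−2)/18, where q = m(m−1)/2. -/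
/-- The set `Q` of ordered component pairs `(a,b)` with `a < b`. -/
def pairsQ (m : ℕ) : Finset (Fin m × Fin m) :=
  Finset.univ.filter fun p => p.1 < p.2

/-- The `J`-characteristic `J_W(D) = Σ_{x ∈ D} Π_{(a,b) ∈ W} z_ab(x)`. -/
noncomputable def Jchar {m : ℕ} {ι : Type} [Fintype ι] (D : ι → Run m)
    (W : Finset (Fin m × Fin m)) : ℝ :=
  ∑ i, ∏ p ∈ W, zab (D i) p

/-- The centralized generalized wordlength pattern
`C_a(D) = Σ_{W ⊆ Q, |W| = a} (J_W(D)/n − J_W(D_full)/m!)²`,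
where the full design consists of all `m!` permutations. -/
noncomputable def Cwlp {m n : ℕ} (D : Fin n → Run m) (a : ℕ) : ℝ :=
  ∑ W ∈ (pairsQ m).powersetCard a,
    (Jchar D W / (n : ℝ) - Jchar (fun σ : Run m => σ) W / (Nat.factorial m : ℝ)) ^ 2

open Finset

namespace OofA
variable {m : ℕ}




/-- sign helper -/
def sgn {m : ℕ} (u v : Fin m) : ℝ := if u < v then 1 else -1

lemma zab_def (x : Run m) (p : Fin m × Fin m) : zab x p = sgn (x.symm p.1) (x.symm p.2) := rfl

lemma sgn_mul_self (u v : Fin m) : sgn u v * sgn u v = 1 := by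
  unfold sgn; split <;> norm_num

lemma sgn_self (u : Fin m) : sgn u u = -1 := if_neg (lt_irrefl u)

lemma sgn_symm {u v : Fin m} (h : u ≠ v) : sgn v u = - sgn u v := by
  rcases h.lt_or_gt with h1 | h1 <;> simp [sgn, h1, h1.not_gt, asymm h1]

lemma sgn_triple {u v w : Fin m} (huv : u ≠ v) (huw : u ≠ w) (hvw : v ≠ w) :
    sgn u v * sgn u w + sgn v w * sgn v u + sgn w u * sgn w v = 1 := by
  rcases huv.lt_or_gt with h1 | h1 <;> rcases huw.lt_or_gt with h2 | h2 <;>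
    rcases hvw.lt_or_gt with h3 | h3 <;>
    first
      | (exact absurd (h1.trans h3) (asymm h2))
      | (exact absurd (h2.trans h3) (asymm h1))
      | (simp [sgn, h1, h2, h3, h1.not_gt, h2.not_gt, h3.not_gt])

lemma mul_symm_apply (g σ : Run m) (a : Fin m) : (g * σ).symm a = σ.symm (g.symm a) := rfl

lemma sum_perm_reindex (g : Run m) (f : Run m → ℝ) :
    ∑ σ : Run m, f (g * σ) = ∑ σ : Run m, f σ :=
  Equiv.sum_comp (Equiv.mulLeft g) f

lemma card_perm_real : ((Fintype.card (Run m)) : ℝ) = (Nat.factorial m : ℝ) := by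
  simp [Fintype.card_perm]






lemma sum_sgn_shared {a b c : Fin m} (hab : a ≠ b) (hac : a ≠ c) (hbc : b ≠ c) :
    ∑ σ : Run m, sgn (σ.symm a) (σ.symm b) * sgn (σ.symm a) (σ.symm c)
      = (Nat.factorial m : ℝ) / 3 := by
  classical
  set τ : Run m := Equiv.swap a b * Equiv.swap b c with hτdef
  have hτa : τ a = b := by
    simp [hτdef, Equiv.Perm.mul_apply, Equiv.swap_apply_of_ne_of_ne hab hac,
      Equiv.swap_apply_left]
  have hτb : τ b = c := by
    simp [hτdef, Equiv.Perm.mul_apply, Equiv.swap_apply_left,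
      Equiv.swap_apply_of_ne_of_ne hac.symm hbc.symm]
  have hτc : τ c = a := by
    simp [hτdef, Equiv.Perm.mul_apply, Equiv.swap_apply_right]
  set f : Run m → ℝ := fun σ => sgn (σ.symm a) (σ.symm b) * sgn (σ.symm a) (σ.symm c) with hf
  have hsymm : ∀ (σ : Run m) (x : Fin m), (τ⁻¹ * σ).symm x = σ.symm (τ x) := by
    intro σ x
    rw [mul_symm_apply, Equiv.Perm.inv_def, Equiv.symm_symm]
  have key : ∀ σ : Run m, f σ + f (τ⁻¹ * σ) + f (τ⁻¹ * (τ⁻¹ * σ)) = 1 := by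
    intro σ
    have hu : σ.symm a ≠ σ.symm b := σ.symm.injective.ne hab
    have hv : σ.symm a ≠ σ.symm c := σ.symm.injective.ne hac
    have hw : σ.symm b ≠ σ.symm c := σ.symm.injective.ne hbc
    simp only [hf, hsymm σ, hsymm (τ⁻¹ * σ), hτa, hτb, hτc]
    exact sgn_triple hu hv hw
  have h3 : ∑ σ : Run m, (f σ + f (τ⁻¹ * σ) + f (τ⁻¹ * (τ⁻¹ * σ))) = (Nat.factorial m : ℝ) := by
    rw [Finset.sum_congr rfl (fun σ _ => key σ)]
    simp [card_univ, Fintype.card_perm]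
  have h4 : ∑ σ : Run m, f (τ⁻¹ * σ) = ∑ σ : Run m, f σ := sum_perm_reindex τ⁻¹ f
  have h5 : ∑ σ : Run m, f (τ⁻¹ * (τ⁻¹ * σ)) = ∑ σ : Run m, f σ :=
    (sum_perm_reindex τ⁻¹ (fun σ => f (τ⁻¹ * σ))).trans h4
  rw [Finset.sum_add_distrib, Finset.sum_add_distrib, h4, h5] at h3
  linarith

lemma sum_sgn_disj {a b c d : Fin m} (hab : a ≠ b) (hca : c ≠ a) (hcb : c ≠ b)
    (hda : d ≠ a) (hdb : d ≠ b) :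
    ∑ σ : Run m, sgn (σ.symm a) (σ.symm b) * sgn (σ.symm c) (σ.symm d) = 0 := by
  classical
  set f : Run m → ℝ := fun σ => sgn (σ.symm a) (σ.symm b) * sgn (σ.symm c) (σ.symm d) with hf
  set g : Run m := Equiv.swap a b with hg
  have hsymm : ∀ (σ : Run m) (x : Fin m), (g * σ).symm x = σ.symm (Equiv.swap a b x) := by
    intro σ x
    rw [mul_symm_apply, hg, Equiv.symm_swap]
  have key : ∀ σ : Run m, f (g * σ) = - f σ := by
    intro σ
    have hu : σ.symm a ≠ σ.symm b := σ.symm.injective.ne hab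
    simp only [hf, hsymm σ, Equiv.swap_apply_left, Equiv.swap_apply_right,
      Equiv.swap_apply_of_ne_of_ne hca hcb, Equiv.swap_apply_of_ne_of_ne hda hdb]
    rw [sgn_symm hu.symm]
    ring
  have h1 : ∑ σ : Run m, f (g * σ) = ∑ σ : Run m, f σ := sum_perm_reindex g f
  rw [Finset.sum_congr rfl (fun σ _ => key σ), Finset.sum_neg_distrib] at h1
  linarith






lemma Msum_eval {a b c d : Fin m} (hab : a < b) (hcd : c < d) :
    ∑ σ : Run m, sgn (σ.symm a) (σ.symm b) * sgn (σ.symm c) (σ.symm d)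
      = (Nat.factorial m : ℝ) / 3 *
        ((if c = a then (1:ℝ) else 0) + (if d = b then (1:ℝ) else 0)
          + (if c = a ∧ d = b then (1:ℝ) else 0)
          - (if c = b then (1:ℝ) else 0) - (if d = a then (1:ℝ) else 0)) := by
  classical
  by_cases hca : c = a
  · subst hca
    by_cases hdb : d = b
    · subst hdb
      have : ∀ σ : Run m, sgn (σ.symm c) (σ.symm d) * sgn (σ.symm c) (σ.symm d) = 1 :=
        fun σ => sgn_mul_self _ _
      rw [Finset.sum_congr rfl (fun σ _ => this σ)]
      simp [card_univ, Fintype.card_perm, hab.ne, hab.ne']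
      ring
    · -- shared first coordinate
      rw [sum_sgn_shared hab.ne hcd.ne (fun h => hdb h.symm)]
      simp [hdb, hab.ne, hab.ne', hcd.ne']
  · by_cases hdb : d = b
    · subst hdb
      -- shared second coordinate; c ≠ a; hab : a < d
      have key : ∀ σ : Run m,
          sgn (σ.symm a) (σ.symm d) * sgn (σ.symm c) (σ.symm d)
            = sgn (σ.symm d) (σ.symm a) * sgn (σ.symm d) (σ.symm c) := by
        intro σ
        rw [sgn_symm (σ.symm.injective.ne hab.ne), sgn_symm (σ.symm.injective.ne hcd.ne)]
        ring
      rw [Finset.sum_congr rfl (fun σ _ => key σ),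
        sum_sgn_shared hab.ne' hcd.ne' (fun h => hca h.symm)]
      simp [hca, hcd.ne, hab.ne']
    · by_cases hcb : c = b
      · subst hcb
        -- a < c < d
        have had : a ≠ d := (hab.trans hcd).ne
        have key : ∀ σ : Run m,
            sgn (σ.symm a) (σ.symm c) * sgn (σ.symm c) (σ.symm d)
              = - (sgn (σ.symm c) (σ.symm a) * sgn (σ.symm c) (σ.symm d)) := by
          intro σ
          rw [sgn_symm (σ.symm.injective.ne hab.ne)]
          ring
        rw [Finset.sum_congr rfl (fun σ _ => key σ), Finset.sum_neg_distrib,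
          sum_sgn_shared hab.ne' hcd.ne had]
        simp [hca, hab.ne, hcd.ne', Ne.symm had]
      · by_cases hda : d = a
        · subst hda
          -- c < d < b
          have key : ∀ σ : Run m,
              sgn (σ.symm d) (σ.symm b) * sgn (σ.symm c) (σ.symm d)
                = - (sgn (σ.symm d) (σ.symm b) * sgn (σ.symm d) (σ.symm c)) := by
            intro σ
            rw [sgn_symm (σ.symm.injective.ne hcd.ne)]
            ring
          rw [Finset.sum_congr rfl (fun σ _ => key σ), Finset.sum_neg_distrib,
            sum_sgn_shared hab.ne hcd.ne' (fun h => hcb h.symm)]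
          simp [hca, hcb, hdb]
        · -- all distinct
          rw [sum_sgn_disj hab.ne hca hcb hda hdb]
          simp [hca, hcb, hda, hdb, fun h : c = a ∧ d = b => hca h.1]



lemma mem_pairsQ {k : ℕ} {p : Fin k × Fin k} : p ∈ pairsQ k ↔ p.1 < p.2 := by
  simp [pairsQ]

lemma sum_pairsQ {k : ℕ} (f : Fin k × Fin k → ℝ) :
    ∑ p ∈ pairsQ k, f p = ∑ a : Fin k, ∑ b ∈ Ioi a, f (a, b) := by
  rw [pairsQ, Finset.sum_filter, Fintype.sum_prod_type]
  refine Finset.sum_congr rfl fun a _ => ?_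
  rw [← Finset.sum_filter]
  congr 1
  ext b
  simp

lemma sum_pairsQ' {k : ℕ} (f : Fin k × Fin k → ℝ) :
    ∑ p ∈ pairsQ k, f p = ∑ b : Fin k, ∑ a ∈ Iio b, f (a, b) := by
  rw [pairsQ, Finset.sum_filter, Fintype.sum_prod_type, Finset.sum_comm]
  refine Finset.sum_congr rfl fun b _ => ?_
  rw [← Finset.sum_filter]
  congr 1
  ext a
  simp

lemma card_Ioi_cast {k : ℕ} (a : Fin k) : (((Ioi a).card : ℕ) : ℝ) = (k:ℝ) - 1 - ((a:ℕ):ℝ) := by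
  rw [Fin.card_Ioi]
  have h1 : (a:ℕ) + 1 ≤ k := a.isLt
  rw [Nat.cast_sub (by omega), Nat.cast_sub (by omega)]
  norm_num

lemma card_Iio_cast {k : ℕ} (b : Fin k) : (((Iio b).card : ℕ) : ℝ) = ((b:ℕ):ℝ) := by
  rw [Fin.card_Iio]

lemma sum_range_cast (M : ℕ) : ∑ j ∈ range M, (j:ℝ) = (M:ℝ)*((M:ℝ)-1)/2 := by
  induction M with
  | zero => simp
  | succ M ih => rw [Finset.sum_range_succ, ih]; push_cast; ring

lemma sum_range_cast_sq (M : ℕ) : ∑ j ∈ range M, (j:ℝ)*(j:ℝ) = (M:ℝ)*((M:ℝ)-1)*(2*(M:ℝ)-1)/6 := by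
  induction M with
  | zero => simp
  | succ M ih => rw [Finset.sum_range_succ, ih]; push_cast; ring

lemma card_pairsQ_cast (k : ℕ) : (((pairsQ k).card : ℕ) : ℝ) = (k:ℝ)*((k:ℝ)-1)/2 := by
  have h : ((pairsQ k).card : ℝ) = ∑ p ∈ pairsQ k, (1:ℝ) := by simp
  rw [h, sum_pairsQ' (fun _ => (1:ℝ))]
  have h2 : ∀ b : Fin k, ∑ _a ∈ Iio b, (1:ℝ) = ((b:ℕ):ℝ) := by
    intro b; rw [Finset.sum_const, nsmul_eq_mul, mul_one, card_Iio_cast]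
  rw [Finset.sum_congr rfl (fun b _ => h2 b), Fin.sum_univ_eq_sum_range (fun j => (j:ℝ)) k,
    sum_range_cast]




lemma sum_split_sym {α : Type*} [Fintype α] [LinearOrder α] (G : α → α → ℝ)
    (hsym : ∀ i j, G i j = G j i) :
    ∑ i : α, ∑ j : α, G i j
      = 2 * (∑ p ∈ Finset.univ.filter (fun p : α × α => p.1 < p.2), G p.1 p.2)
        + ∑ i : α, G i i := by
  classical
  have h0 : ∑ i : α, ∑ j : α, G i j = ∑ p : α × α, G p.1 p.2 :=
    (Fintype.sum_prod_type (f := fun p : α × α => G p.1 p.2)).symm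
  rw [h0, ← Finset.sum_filter_add_sum_filter_not Finset.univ (fun p : α × α => p.1 < p.2)]
  have h1 : Finset.univ.filter (fun p : α × α => ¬ p.1 < p.2)
      = (Finset.univ.filter (fun p : α × α => p.2 < p.1))
        ∪ (Finset.univ.filter (fun p : α × α => p.1 = p.2)) := by
    ext p
    simp only [Finset.mem_filter, Finset.mem_union, Finset.mem_univ, true_and, not_lt]
    constructor
    · intro h
      rcases lt_or_eq_of_le h with h' | h'
      · exact Or.inl h'
      · exact Or.inr h'.symm
    · rintro (h | h)
      · exact h.le
      · exact h.ge
  have hdisj : Disjoint (Finset.univ.filter (fun p : α × α => p.2 < p.1))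
      (Finset.univ.filter (fun p : α × α => p.1 = p.2)) := by
    rw [Finset.disjoint_left]
    intro p hp hq
    simp only [Finset.mem_filter] at hp hq
    exact absurd hq.2 (ne_of_gt hp.2)
  rw [h1, Finset.sum_union hdisj]
  have h2 : ∑ p ∈ Finset.univ.filter (fun p : α × α => p.2 < p.1), G p.1 p.2
      = ∑ p ∈ Finset.univ.filter (fun p : α × α => p.1 < p.2), G p.1 p.2 := by
    refine Finset.sum_nbij' (i := Prod.swap) (j := Prod.swap) ?_ ?_ ?_ ?_ ?_
    · intro p hp; simp only [Finset.mem_filter, Finset.mem_univ, true_and] at hp ⊢; exact hp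
    · intro p hp; simp only [Finset.mem_filter, Finset.mem_univ, true_and] at hp ⊢; exact hp
    · intro p _; simp
    · intro p _; simp
    · intro p _; exact hsym p.1 p.2
  have h3 : ∑ p ∈ Finset.univ.filter (fun p : α × α => p.1 = p.2), G p.1 p.2
      = ∑ i : α, G i i := by
    have him : Finset.univ.filter (fun p : α × α => p.1 = p.2)
        = Finset.univ.image (fun i : α => (i, i)) := by
      ext p
      simp only [Finset.mem_filter, Finset.mem_univ, true_and, Finset.mem_image, Prod.ext_iff]
      constructor
      · intro h; exact ⟨p.1, rfl, h⟩
      · rintro ⟨i, h1, h2⟩; rw [← h1, ← h2]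
    rw [him, Finset.sum_image (by intro i _ j _ h; simpa [Prod.ext_iff] using h)]
  rw [h2, h3]
  ring


/-- The pairwise correlation `T(x,y) = Σ_{p ∈ Q} z_p(x) z_p(y)`. -/
noncomputable def Tz {m : ℕ} (x y : Run m) : ℝ := ∑ p ∈ pairsQ m, zab x p * zab y p

lemma Tz_comm (x y : Run m) : Tz x y = Tz y x :=
  Finset.sum_congr rfl fun p _ => mul_comm _ _

lemma zab_sq (x : Run m) (p : Fin m × Fin m) : zab x p * zab x p = 1 := by
  rw [zab_def]; exact sgn_mul_self _ _

lemma Tz_self (x : Run m) : Tz x x = (((pairsQ m).card : ℕ) : ℝ) := by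
  unfold Tz
  rw [Finset.sum_congr rfl (fun p _ => zab_sq x p)]
  simp

lemma Tz_double (x y : Run m) :
    2 * Tz x y
      = (∑ a : Fin m, ∑ b : Fin m, sgn (x.symm a) (x.symm b) * sgn (y.symm a) (y.symm b))
        - (m : ℝ) := by
  have hsym : ∀ a b : Fin m,
      sgn (x.symm a) (x.symm b) * sgn (y.symm a) (y.symm b)
        = sgn (x.symm b) (x.symm a) * sgn (y.symm b) (y.symm a) := by
    intro a b
    rcases eq_or_ne a b with rfl | h
    · rfl
    · rw [sgn_symm (x.symm.injective.ne h.symm), sgn_symm (y.symm.injective.ne h.symm)]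
      ring
  have hsplit := sum_split_sym
    (fun a b => sgn (x.symm a) (x.symm b) * sgn (y.symm a) (y.symm b)) hsym
  have hdiag : ∑ a : Fin m, sgn (x.symm a) (x.symm a) * sgn (y.symm a) (y.symm a) = (m:ℝ) := by
    have : ∀ a : Fin m, sgn (x.symm a) (x.symm a) * sgn (y.symm a) (y.symm a) = 1 := by
      intro a; rw [sgn_self, sgn_self]; norm_num
    rw [Finset.sum_congr rfl (fun a _ => this a)]
    simp
  have hTz : ∑ p ∈ Finset.univ.filter (fun p : Fin m × Fin m => p.1 < p.2),
      sgn (x.symm p.1) (x.symm p.2) * sgn (y.symm p.1) (y.symm p.2) = Tz x y := by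
    unfold Tz pairsQ
    exact Finset.sum_congr rfl fun p _ => rfl
  rw [hTz, hdiag] at hsplit
  rw [hsplit]
  ring

lemma Tz_mul_left (g x y : Run m) : Tz (g * x) (g * y) = Tz x y := by
  have h1 := Tz_double x y
  have h2 := Tz_double (g * x) (g * y)
  have h3 : (∑ a : Fin m, ∑ b : Fin m,
        sgn ((g*x).symm a) ((g*x).symm b) * sgn ((g*y).symm a) ((g*y).symm b))
      = ∑ a : Fin m, ∑ b : Fin m, sgn (x.symm a) (x.symm b) * sgn (y.symm a) (y.symm b) := by
    have e1 : ∀ a b : Fin m,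
        sgn ((g*x).symm a) ((g*x).symm b) * sgn ((g*y).symm a) ((g*y).symm b)
          = sgn (x.symm (g.symm a)) (x.symm (g.symm b)) * sgn (y.symm (g.symm a)) (y.symm (g.symm b)) := by
      intro a b; rw [mul_symm_apply, mul_symm_apply, mul_symm_apply, mul_symm_apply]
    rw [Finset.sum_congr rfl (fun a _ => Finset.sum_congr rfl (fun b _ => e1 a b))]
    rw [Equiv.sum_comp g.symm (fun a => ∑ b : Fin m,
      sgn (x.symm a) (x.symm (g.symm b)) * sgn (y.symm a) (y.symm (g.symm b)))]
    exact Finset.sum_congr rfl fun a _ => Equiv.sum_comp g.symm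
      (fun b => sgn (x.symm a) (x.symm b) * sgn (y.symm a) (y.symm b))
  rw [h3] at h2
  linarith

lemma sum_Tz_sq_const (x : Run m) :
    ∑ σ : Run m, (Tz σ x)^2 = ∑ σ : Run m, (Tz σ 1)^2 := by
  have h := sum_perm_reindex x (fun σ => (Tz σ x)^2)
  rw [← h]
  refine Finset.sum_congr rfl fun σ _ => ?_
  have : Tz (x * σ) x = Tz σ 1 := by
    conv_lhs => rw [show x = x * 1 from (mul_one x).symm]
    exact Tz_mul_left x σ 1
  rw [this]


lemma zab_one {p : Fin m × Fin m} (hp : p ∈ pairsQ m) : zab (1 : Run m) p = 1 := by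
  have h := mem_pairsQ.mp hp
  simp [zab, h, Equiv.Perm.one_symm, Equiv.Perm.one_apply]

lemma indsum_eq1 {p : Fin m × Fin m} :
    ∑ p' ∈ pairsQ m, (if p'.1 = p.1 then (1:ℝ) else 0) = (m:ℝ) - 1 - ((p.1:ℕ):ℝ) := by
  rw [sum_pairsQ (fun p' => if p'.1 = p.1 then (1:ℝ) else 0)]
  have h : ∀ a : Fin m, (∑ _b ∈ Ioi a, (if a = p.1 then (1:ℝ) else 0))
      = if a = p.1 then (((Ioi a).card : ℕ):ℝ) else 0 := by
    intro a
    rw [Finset.sum_const, nsmul_eq_mul]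
    simp [mul_ite]
  rw [Finset.sum_congr rfl (fun a _ => h a), Finset.sum_ite_eq' Finset.univ p.1
    (fun a => (((Ioi a).card : ℕ):ℝ)), if_pos (Finset.mem_univ p.1)]
  exact card_Ioi_cast p.1

lemma indsum_eq2 {p : Fin m × Fin m} :
    ∑ p' ∈ pairsQ m, (if p'.2 = p.2 then (1:ℝ) else 0) = ((p.2:ℕ):ℝ) := by
  rw [sum_pairsQ' (fun p' => if p'.2 = p.2 then (1:ℝ) else 0)]
  have h : ∀ b : Fin m, (∑ _a ∈ Iio b, (if b = p.2 then (1:ℝ) else 0))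
      = if b = p.2 then (((Iio b).card : ℕ):ℝ) else 0 := by
    intro b
    rw [Finset.sum_const, nsmul_eq_mul]
    simp [mul_ite]
  rw [Finset.sum_congr rfl (fun b _ => h b), Finset.sum_ite_eq' Finset.univ p.2
    (fun b => (((Iio b).card : ℕ):ℝ))]
  simp [card_Iio_cast]

lemma indsum_eq3 {p : Fin m × Fin m} (hp : p ∈ pairsQ m) :
    ∑ p' ∈ pairsQ m, (if p'.1 = p.1 ∧ p'.2 = p.2 then (1:ℝ) else 0) = 1 := by
  have h : ∀ p' : Fin m × Fin m, (if p'.1 = p.1 ∧ p'.2 = p.2 then (1:ℝ) else 0)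
      = if p' = p then (1:ℝ) else 0 := by
    intro p'
    congr 1
    · exact propext (Prod.ext_iff.symm)
  rw [Finset.sum_congr rfl (fun p' _ => h p'), Finset.sum_ite_eq' (pairsQ m) p (fun _ => (1:ℝ))]
  simp [hp]

lemma indsum_eq4 {p : Fin m × Fin m} :
    ∑ p' ∈ pairsQ m, (if p'.1 = p.2 then (1:ℝ) else 0) = (m:ℝ) - 1 - ((p.2:ℕ):ℝ) := by
  rw [sum_pairsQ (fun p' => if p'.1 = p.2 then (1:ℝ) else 0)]
  have h : ∀ a : Fin m, (∑ _b ∈ Ioi a, (if a = p.2 then (1:ℝ) else 0))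
      = if a = p.2 then (((Ioi a).card : ℕ):ℝ) else 0 := by
    intro a
    rw [Finset.sum_const, nsmul_eq_mul]
    simp [mul_ite]
  rw [Finset.sum_congr rfl (fun a _ => h a), Finset.sum_ite_eq' Finset.univ p.2
    (fun a => (((Ioi a).card : ℕ):ℝ)), if_pos (Finset.mem_univ p.2)]
  exact card_Ioi_cast p.2

lemma indsum_eq5 {p : Fin m × Fin m} :
    ∑ p' ∈ pairsQ m, (if p'.2 = p.1 then (1:ℝ) else 0) = ((p.1:ℕ):ℝ) := by
  rw [sum_pairsQ' (fun p' => if p'.2 = p.1 then (1:ℝ) else 0)]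
  have h : ∀ b : Fin m, (∑ _a ∈ Iio b, (if b = p.1 then (1:ℝ) else 0))
      = if b = p.1 then (((Iio b).card : ℕ):ℝ) else 0 := by
    intro b
    rw [Finset.sum_const, nsmul_eq_mul]
    simp [mul_ite]
  rw [Finset.sum_congr rfl (fun b _ => h b), Finset.sum_ite_eq' Finset.univ p.1
    (fun b => (((Iio b).card : ℕ):ℝ))]
  simp [card_Iio_cast]

lemma sum_fst_pairsQ :
    ∑ p ∈ pairsQ m, ((p.1:ℕ):ℝ) = ∑ j ∈ range m, ((m:ℝ) - 1 - (j:ℝ)) * (j:ℝ) := by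
  rw [sum_pairsQ (fun p => ((p.1:ℕ):ℝ))]
  have h : ∀ a : Fin m, (∑ _b ∈ Ioi a, ((a:ℕ):ℝ)) = ((m:ℝ) - 1 - ((a:ℕ):ℝ)) * ((a:ℕ):ℝ) := by
    intro a
    rw [Finset.sum_const, nsmul_eq_mul, card_Ioi_cast]
  rw [Finset.sum_congr rfl (fun a _ => h a)]
  exact Fin.sum_univ_eq_sum_range (fun j => ((m:ℝ) - 1 - (j:ℝ)) * (j:ℝ)) m

lemma sum_snd_pairsQ :
    ∑ p ∈ pairsQ m, ((p.2:ℕ):ℝ) = ∑ j ∈ range m, (j:ℝ) * (j:ℝ) := by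
  rw [sum_pairsQ' (fun p => ((p.2:ℕ):ℝ))]
  have h : ∀ b : Fin m, (∑ _a ∈ Iio b, ((b:ℕ):ℝ)) = ((b:ℕ):ℝ) * ((b:ℕ):ℝ) := by
    intro b
    rw [Finset.sum_const, nsmul_eq_mul, card_Iio_cast]
  rw [Finset.sum_congr rfl (fun b _ => h b)]
  exact Fin.sum_univ_eq_sum_range (fun j => (j:ℝ) * (j:ℝ)) m

lemma sum_Tz_sq_one :
    ∑ σ : Run m, (Tz σ 1)^2
      = (Nat.factorial m : ℝ) * ((m:ℝ)*((m:ℝ)-1)*(2*(m:ℝ)+5)) / 18 := by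
  classical
  have h1 : ∀ σ : Run m, Tz σ 1 = ∑ p ∈ pairsQ m, sgn (σ.symm p.1) (σ.symm p.2) := by
    intro σ
    unfold Tz
    refine Finset.sum_congr rfl fun p hp => ?_
    rw [zab_one hp, mul_one, zab_def]
  have h2 : ∀ σ : Run m, (Tz σ 1)^2 = ∑ p ∈ pairsQ m, ∑ p' ∈ pairsQ m,
      sgn (σ.symm p.1) (σ.symm p.2) * sgn (σ.symm p'.1) (σ.symm p'.2) := by
    intro σ
    rw [h1 σ, sq, Finset.sum_mul_sum]
  rw [Finset.sum_congr rfl (fun σ _ => h2 σ), Finset.sum_comm]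
  have h3 : ∀ p ∈ pairsQ m, (∑ σ : Run m, ∑ p' ∈ pairsQ m,
        sgn (σ.symm p.1) (σ.symm p.2) * sgn (σ.symm p'.1) (σ.symm p'.2))
      = (Nat.factorial m : ℝ) / 3 * (1 + 2*((p.2:ℕ):ℝ) - 2*((p.1:ℕ):ℝ)) := by
    intro p hp
    rw [Finset.sum_comm]
    have h4 : ∀ p' ∈ pairsQ m, (∑ σ : Run m,
          sgn (σ.symm p.1) (σ.symm p.2) * sgn (σ.symm p'.1) (σ.symm p'.2))
        = (Nat.factorial m : ℝ) / 3 *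
          ((if p'.1 = p.1 then (1:ℝ) else 0) + (if p'.2 = p.2 then (1:ℝ) else 0)
            + (if p'.1 = p.1 ∧ p'.2 = p.2 then (1:ℝ) else 0)
            - (if p'.1 = p.2 then (1:ℝ) else 0) - (if p'.2 = p.1 then (1:ℝ) else 0)) :=
      fun p' hp' => Msum_eval (mem_pairsQ.mp hp) (mem_pairsQ.mp hp')
    rw [Finset.sum_congr rfl h4, ← Finset.mul_sum]
    congr 1
    rw [Finset.sum_sub_distrib, Finset.sum_sub_distrib, Finset.sum_add_distrib,
      Finset.sum_add_distrib, indsum_eq1, indsum_eq2, indsum_eq3 hp, indsum_eq4, indsum_eq5]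
    ring
  rw [Finset.sum_congr rfl h3]
  have hconst : ∑ p ∈ pairsQ m, (Nat.factorial m : ℝ) / 3 *
      (1 + 2*((p.2:ℕ):ℝ) - 2*((p.1:ℕ):ℝ))
      = (Nat.factorial m : ℝ) / 3 *
        ((((pairsQ m).card : ℕ):ℝ) + 2 * (∑ p ∈ pairsQ m, ((p.2:ℕ):ℝ))
          - 2 * (∑ p ∈ pairsQ m, ((p.1:ℕ):ℝ))) := by
    rw [← Finset.mul_sum]
    congr 1
    rw [Finset.sum_sub_distrib, Finset.sum_add_distrib, ← Finset.mul_sum, ← Finset.mul_sum]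
    simp
  rw [hconst, card_pairsQ_cast, sum_fst_pairsQ, sum_snd_pairsQ, sum_range_cast_sq]
  have hexp : ∑ j ∈ range m, ((m:ℝ) - 1 - (j:ℝ)) * (j:ℝ)
      = ((m:ℝ) - 1) * (∑ j ∈ range m, (j:ℝ)) - ∑ j ∈ range m, (j:ℝ) * (j:ℝ) := by
    rw [Finset.mul_sum, ← Finset.sum_sub_distrib]
    exact Finset.sum_congr rfl fun j _ => by ring
  rw [hexp, sum_range_cast, sum_range_cast_sq]
  ring


lemma zz_ite (x y : Run m) {p : Fin m × Fin m} (hp : p.1 < p.2) :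
    zab x p * zab y p
      = if ((((x.symm p.1 : ℕ) : ℤ) - ((x.symm p.2 : ℕ) : ℤ)) *
            (((y.symm p.1 : ℕ) : ℤ) - ((y.symm p.2 : ℕ) : ℤ)) < 0) then (-1:ℝ) else 1 := by
  have hne : p.1 ≠ p.2 := ne_of_lt hp
  have hx : x.symm p.1 ≠ x.symm p.2 := x.symm.injective.ne hne
  have hy : y.symm p.1 ≠ y.symm p.2 := y.symm.injective.ne hne
  set A : ℤ := ((x.symm p.1 : ℕ) : ℤ) with hA
  set B : ℤ := ((x.symm p.2 : ℕ) : ℤ) with hB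
  set C : ℤ := ((y.symm p.1 : ℕ) : ℤ) with hC
  set E : ℤ := ((y.symm p.2 : ℕ) : ℤ) with hE
  unfold zab
  rcases hx.lt_or_gt with h1 | h1 <;> rcases hy.lt_or_gt with h2 | h2
  · have hAB : A < B := by rw [hA, hB]; exact_mod_cast h1
    have hCE : C < E := by rw [hC, hE]; exact_mod_cast h2
    rw [if_pos h1, if_pos h2, if_neg]
    · norm_num
    · push_neg
      exact le_of_lt (mul_pos_of_neg_of_neg (by linarith) (by linarith))
  · have hAB : A < B := by rw [hA, hB]; exact_mod_cast h1
    have hCE : E < C := by rw [hC, hE]; exact_mod_cast h2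
    rw [if_pos h1, if_neg h2.not_gt, if_pos]
    · norm_num
    · exact mul_neg_of_neg_of_pos (by linarith) (by linarith)
  · have hAB : B < A := by rw [hA, hB]; exact_mod_cast h1
    have hCE : C < E := by rw [hC, hE]; exact_mod_cast h2
    rw [if_neg h1.not_gt, if_pos h2, if_pos]
    · norm_num
    · exact mul_neg_of_pos_of_neg (by linarith) (by linarith)
  · have hAB : B < A := by rw [hA, hB]; exact_mod_cast h1
    have hCE : E < C := by rw [hC, hE]; exact_mod_cast h2
    rw [if_neg h1.not_gt, if_neg h2.not_gt, if_neg]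
    · norm_num
    · push_neg
      exact le_of_lt (mul_pos (by linarith) (by linarith))

lemma Tz_eq_kendall (x y : Run m) :
    Tz x y = (((pairsQ m).card : ℕ) : ℝ) - 2 * (kendall x y : ℝ) := by
  classical
  set C : Fin m × Fin m → Prop := fun p =>
    ((((x.symm p.1 : ℕ) : ℤ) - ((x.symm p.2 : ℕ) : ℤ)) *
      (((y.symm p.1 : ℕ) : ℤ) - ((y.symm p.2 : ℕ) : ℤ)) < 0) with hCdef
  have hset : (Finset.univ.filter fun p : Fin m × Fin m => p.1 < p.2 ∧ C p)
      = (pairsQ m).filter C := by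
    rw [pairsQ, Finset.filter_filter]
  have hk : (kendall x y : ℝ) = (((pairsQ m).filter C).card : ℝ) := by
    unfold kendall
    rw [← hset]
  have hpt : ∀ p ∈ pairsQ m, zab x p * zab y p
      = 1 - 2 * (if C p then (1:ℝ) else 0) := by
    intro p hp
    rw [zz_ite x y (mem_pairsQ.mp hp)]
    split_ifs <;> ring
  unfold Tz
  rw [Finset.sum_congr rfl hpt, Finset.sum_sub_distrib, ← Finset.mul_sum]
  rw [Finset.sum_boole]
  simp only [Finset.sum_const, nsmul_eq_mul, mul_one]
  rw [hk]

lemma sum_powersetCard_two {α : Type*} [DecidableEq α] (s : Finset α) (f : α → ℝ) :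
    2 * ∑ W ∈ s.powersetCard 2, ∏ p ∈ W, f p
      = (∑ p ∈ s, f p)^2 - ∑ p ∈ s, (f p)^2 := by
  classical
  induction s using Finset.cons_induction with
  | empty =>
    have h : Finset.powersetCard 2 (∅ : Finset α) = ∅ :=
      Finset.powersetCard_eq_empty.mpr (by simp)
    simp [h]
  | cons a s ha ih =>
    rw [Finset.cons_eq_insert]
    rw [show (2:ℕ) = Nat.succ 1 from rfl, Finset.powersetCard_succ_insert ha]
    have hdisj : Disjoint (Finset.powersetCard (Nat.succ 1) s)
        ((Finset.powersetCard 1 s).image (insert a)) := by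
      rw [Finset.disjoint_left]
      intro W hW hW'
      have h1 : W ⊆ s := (Finset.mem_powersetCard.mp hW).1
      rcases Finset.mem_image.mp hW' with ⟨V, _, rfl⟩
      exact ha (h1 (Finset.mem_insert_self a V))
    rw [Finset.sum_union hdisj]
    have hinj : ∀ V1 ∈ Finset.powersetCard 1 s, ∀ V2 ∈ Finset.powersetCard 1 s,
        insert a V1 = insert a V2 → V1 = V2 := by
      intro V1 h1 V2 h2 h
      have ha1 : a ∉ V1 := fun hx => ha ((Finset.mem_powersetCard.mp h1).1 hx)
      have ha2 : a ∉ V2 := fun hx => ha ((Finset.mem_powersetCard.mp h2).1 hx)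
      rw [← Finset.erase_insert ha1, h, Finset.erase_insert ha2]
    rw [Finset.sum_image hinj]
    have hprod : ∀ V ∈ Finset.powersetCard 1 s, ∏ p ∈ insert a V, f p = f a * ∏ p ∈ V, f p := by
      intro V hV
      exact Finset.prod_insert (fun hx => ha ((Finset.mem_powersetCard.mp hV).1 hx))
    rw [Finset.sum_congr rfl hprod, ← Finset.mul_sum]
    have hone : ∑ V ∈ Finset.powersetCard 1 s, ∏ p ∈ V, f p = ∑ p ∈ s, f p := by
      rw [Finset.powersetCard_one, Finset.sum_map]
      simp
    rw [hone, Finset.sum_insert ha, Finset.sum_insert ha]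
    linear_combination ih

lemma zabzab_sq (x y : Run m) (p : Fin m × Fin m) :
    (zab x p * zab y p)^2 = 1 := by
  have h1 := zab_sq x p
  have h2 := zab_sq y p
  nlinarith [h1, h2]

lemma sum_W2 (x y : Run m) :
    ∑ W ∈ (pairsQ m).powersetCard 2, (∏ p ∈ W, zab x p) * (∏ p ∈ W, zab y p)
      = ((Tz x y)^2 - (((pairsQ m).card : ℕ) : ℝ)) / 2 := by
  classical
  have key := sum_powersetCard_two (pairsQ m) (fun p => zab x p * zab y p)
  have h1 : ∀ W ∈ (pairsQ m).powersetCard 2,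
      (∏ p ∈ W, zab x p) * (∏ p ∈ W, zab y p) = ∏ p ∈ W, (zab x p * zab y p) :=
    fun W _ => (Finset.prod_mul_distrib).symm
  rw [Finset.sum_congr rfl h1]
  have h2 : ∑ p ∈ pairsQ m, (zab x p * zab y p) = Tz x y := rfl
  have h3 : ∑ p ∈ pairsQ m, (zab x p * zab y p)^2 = (((pairsQ m).card : ℕ) : ℝ) := by
    rw [Finset.sum_congr rfl (fun p _ => zabzab_sq x y p)]
    simp
  rw [h2, h3] at key
  linarith


lemma Jchar_pair {ι κ : Type} [Fintype ι] [Fintype κ] (D : ι → Run m) (E : κ → Run m) :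
    ∑ W ∈ (pairsQ m).powersetCard 2, Jchar D W * Jchar E W
      = ∑ i : ι, ∑ j : κ, ((Tz (D i) (E j))^2 - (((pairsQ m).card : ℕ) : ℝ))/2 := by
  unfold Jchar
  have h1 : ∀ W : Finset (Fin m × Fin m),
      (∑ i : ι, ∏ p ∈ W, zab (D i) p) * (∑ j : κ, ∏ p ∈ W, zab (E j) p)
        = ∑ i : ι, ∑ j : κ, (∏ p ∈ W, zab (D i) p) * (∏ p ∈ W, zab (E j) p) :=
    fun W => Finset.sum_mul_sum _ _ _ _
  rw [Finset.sum_congr rfl (fun W _ => h1 W), Finset.sum_comm]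
  refine Finset.sum_congr rfl fun i _ => ?_
  rw [Finset.sum_comm]
  refine Finset.sum_congr rfl fun j _ => ?_
  exact sum_W2 (D i) (E j)

lemma sum_cross (x : Run m) :
    ∑ σ : Run m, ((Tz x σ)^2 - (((pairsQ m).card : ℕ) : ℝ))/2
      = ((Nat.factorial m : ℝ) * ((m:ℝ)*((m:ℝ)-1)*(2*(m:ℝ)+5)) / 18
          - (Nat.factorial m : ℝ) * (((pairsQ m).card : ℕ) : ℝ)) / 2 := by
  have e1 : ∀ σ : Run m, ((Tz x σ)^2 - (((pairsQ m).card : ℕ) : ℝ))/2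
      = ((Tz σ x)^2)/2 - (((pairsQ m).card : ℕ) : ℝ)/2 := by
    intro σ; rw [Tz_comm]; ring
  rw [Finset.sum_congr rfl (fun σ _ => e1 σ), Finset.sum_sub_distrib, ← Finset.sum_div,
    sum_Tz_sq_const, sum_Tz_sq_one]
  rw [Finset.sum_const, card_univ, Fintype.card_perm, Fintype.card_fin, nsmul_eq_mul]
  ring


end OofA

open OofA

theorem stmt6 {m n : ℕ} (hm : 2 ≤ m) (hn : 2 ≤ n) (D : Fin n → Run m) :
    Cwlp D 2 =
      ((m : ℝ) * ((m : ℝ) - 1) / 2) * ((m : ℝ) * ((m : ℝ) - 1) / 2 - 1) / 2 -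
        (2 * ((m : ℝ) * ((m : ℝ) - 1) / 2) * ((n : ℝ) - 1) / (n : ℝ)) * kave D +
        (2 * ((n : ℝ) - 1) / (n : ℝ)) * km2 D -
        (m : ℝ) * ((m : ℝ) - 1) * ((m : ℝ) - 2) / 18 := by
  classical
  have hnR : (2:ℝ) ≤ (n:ℝ) := by exact_mod_cast hn
  have hn0 : (n:ℝ) ≠ 0 := by linarith
  have hF0 : (Nat.factorial m : ℝ) ≠ 0 := by
    have := Nat.factorial_pos m
    positivity
  set q : ℝ := (((pairsQ m).card : ℕ) : ℝ) with hqdef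
  have hqval : q = (m:ℝ)*((m:ℝ)-1)/2 := card_pairsQ_cast m
  set F : ℝ := (Nat.factorial m : ℝ) with hFdef
  set c0 : ℝ := F * ((m:ℝ)*((m:ℝ)-1)*(2*(m:ℝ)+5)) / 18 with hc0def
  set K1 : ℝ := ∑ p ∈ Finset.univ.filter (fun p : Fin n × Fin n => p.1 < p.2),
      (kendall (D p.1) (D p.2) : ℝ) with hK1def
  set K2 : ℝ := ∑ p ∈ Finset.univ.filter (fun p : Fin n × Fin n => p.1 < p.2),
      (kendall (D p.1) (D p.2) : ℝ) ^ 2 with hK2def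
  have hNval : ((n.choose 2 : ℕ) : ℝ) = (n:ℝ)*((n:ℝ)-1)/2 := Nat.cast_choose_two (K := ℝ) n
  have hNne : ((n.choose 2 : ℕ) : ℝ) ≠ 0 := by rw [hNval]; nlinarith
  have hkave : kave D = K1 / ((n.choose 2 : ℕ) : ℝ) := rfl
  have hkm2 : km2 D = K2 / ((n.choose 2 : ℕ) : ℝ) := rfl
  -- expand the square in Cwlp
  have hexp : Cwlp D 2
      = (∑ W ∈ (pairsQ m).powersetCard 2, Jchar D W * Jchar D W) / (n:ℝ)^2
        - (∑ W ∈ (pairsQ m).powersetCard 2, Jchar D W * Jchar (fun σ : Run m => σ) W)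
            * (2/((n:ℝ)*F))
        + (∑ W ∈ (pairsQ m).powersetCard 2,
            Jchar (fun σ : Run m => σ) W * Jchar (fun σ : Run m => σ) W) / F^2 := by
    unfold Cwlp
    have hpt : ∀ W ∈ (pairsQ m).powersetCard 2,
        (Jchar D W / (n : ℝ) - Jchar (fun σ : Run m => σ) W / F) ^ 2
          = (Jchar D W * Jchar D W) / (n:ℝ)^2
            - (Jchar D W * Jchar (fun σ : Run m => σ) W) * (2/((n:ℝ)*F))
            + (Jchar (fun σ : Run m => σ) W * Jchar (fun σ : Run m => σ) W) / F^2 := by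
      intro W _
      field_simp
      ring
    rw [Finset.sum_congr rfl hpt, Finset.sum_add_distrib, Finset.sum_sub_distrib,
      ← Finset.sum_div, ← Finset.sum_mul, ← Finset.sum_div]
  -- the three double sums
  have hDD : ∑ W ∈ (pairsQ m).powersetCard 2, Jchar D W * Jchar D W
      = ∑ i : Fin n, ∑ j : Fin n, ((Tz (D i) (D j))^2 - q)/2 := Jchar_pair D D
  have hDF : ∑ W ∈ (pairsQ m).powersetCard 2, Jchar D W * Jchar (fun σ : Run m => σ) W
      = (n:ℝ) * ((c0 - F*q)/2) := by
    rw [Jchar_pair D (fun σ : Run m => σ)]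
    have h1 : ∀ i : Fin n, (∑ σ : Run m, ((Tz (D i) σ)^2 - q)/2) = (c0 - F*q)/2 := by
      intro i
      rw [sum_cross (D i)]
    rw [Finset.sum_congr rfl (fun i _ => h1 i), Finset.sum_const, card_univ,
      Fintype.card_fin, nsmul_eq_mul]
  have hFF : ∑ W ∈ (pairsQ m).powersetCard 2,
        Jchar (fun σ : Run m => σ) W * Jchar (fun σ : Run m => σ) W
      = F * ((c0 - F*q)/2) := by
    rw [Jchar_pair (fun σ : Run m => σ) (fun σ : Run m => σ)]
    have h1 : ∀ σ : Run m, (∑ τ : Run m, ((Tz σ τ)^2 - q)/2) = (c0 - F*q)/2 := by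
      intro σ
      rw [sum_cross σ]
    rw [Finset.sum_congr rfl (fun σ _ => h1 σ), Finset.sum_const, card_univ,
      Fintype.card_perm, Fintype.card_fin, nsmul_eq_mul]
  -- split the DD double sum
  have hsym : ∀ i j : Fin n, ((Tz (D i) (D j))^2 - q)/2 = ((Tz (D j) (D i))^2 - q)/2 := by
    intro i j; rw [Tz_comm]
  have hsplit := sum_split_sym (fun i j => ((Tz (D i) (D j))^2 - q)/2) hsym
  have hdiag : ∑ i : Fin n, ((Tz (D i) (D i))^2 - q)/2 = (n:ℝ) * ((q^2 - q)/2) := by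
    have h1 : ∀ i : Fin n, ((Tz (D i) (D i))^2 - q)/2 = (q^2 - q)/2 := by
      intro i; rw [Tz_self]
    rw [Finset.sum_congr rfl (fun i _ => h1 i), Finset.sum_const, card_univ,
      Fintype.card_fin, nsmul_eq_mul]
  have hoff : ∑ p ∈ Finset.univ.filter (fun p : Fin n × Fin n => p.1 < p.2),
        ((Tz (D p.1) (D p.2))^2 - q)/2
      = ((n:ℝ)*((n:ℝ)-1)/2) * ((q^2 - q)/2) - 2*q*K1 + 2*K2 := by
    have h1 : ∀ p ∈ Finset.univ.filter (fun p : Fin n × Fin n => p.1 < p.2),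
        ((Tz (D p.1) (D p.2))^2 - q)/2
          = (q^2 - q)/2 - 2*q*(kendall (D p.1) (D p.2) : ℝ)
            + 2*((kendall (D p.1) (D p.2) : ℝ))^2 := by
      intro p _
      rw [Tz_eq_kendall]
      ring
    rw [Finset.sum_congr rfl h1, Finset.sum_add_distrib, Finset.sum_sub_distrib,
      Finset.sum_const]
    have hcardn : ((Finset.univ.filter (fun p : Fin n × Fin n => p.1 < p.2)).card : ℝ)
        = (n:ℝ)*((n:ℝ)-1)/2 := card_pairsQ_cast n
    rw [nsmul_eq_mul, hcardn]
    have h2 : ∑ p ∈ Finset.univ.filter (fun p : Fin n × Fin n => p.1 < p.2),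
        2*q*(kendall (D p.1) (D p.2) : ℝ) = 2*q*K1 := by
      rw [hK1def, Finset.mul_sum]
    have h3 : ∑ p ∈ Finset.univ.filter (fun p : Fin n × Fin n => p.1 < p.2),
        2*((kendall (D p.1) (D p.2) : ℝ))^2 = 2*K2 := by
      rw [hK2def, Finset.mul_sum]
    rw [h2, h3]
  rw [hoff, hdiag] at hsplit
  have hn1 : (n:ℝ) - 1 ≠ 0 := by linarith
  rw [hexp, hDD, hDF, hFF, hsplit, hkave, hkm2, hNval, hqval, hc0def]
  field_simp
  ring
end

section
/- Let D be an n-run OofA design on m components with n ≥ 2 such that C_1(D) = 0 and C_2(D) = 0 (in particular, this holds for any order-of-addition orthogonal array of strength 2). Then k_ave(D) = n m(m−1) / (4(n−1)). -/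
open Finset

section helpers
variable {m : ℕ}

lemma fin_int_lt {a b : Fin m} (h : a < b) : ((a : ℕ) : ℤ) - ((b : ℕ) : ℤ) < 0 := by
  have : (a : ℕ) < (b : ℕ) := h
  omega

lemma ite_kendall (x y : Run m) {p : Fin m × Fin m} (hp : p.1 < p.2) :
    (if ((((x.symm p.1 : ℕ) : ℤ) - ((x.symm p.2 : ℕ) : ℤ)) *
        (((y.symm p.1 : ℕ) : ℤ) - ((y.symm p.2 : ℕ) : ℤ)) < 0) then (1 : ℝ) else 0)
      = (1 - zab x p * zab y p) / 2 := by
  have hne : p.1 ≠ p.2 := ne_of_lt hp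
  have hx : x.symm p.1 ≠ x.symm p.2 := fun h => hne (x.symm.injective h)
  have hy : y.symm p.1 ≠ y.symm p.2 := fun h => hne (y.symm.injective h)
  unfold zab
  rcases hx.lt_or_gt with h1 | h1 <;> rcases hy.lt_or_gt with h2 | h2
  · rw [if_pos h1, if_pos h2, if_neg
      (not_lt.mpr (le_of_lt (mul_pos_of_neg_of_neg (fin_int_lt h1) (fin_int_lt h2))))]
    norm_num
  · rw [if_pos h1, if_neg (asymm h2), if_pos
      (mul_neg_of_neg_of_pos (fin_int_lt h1) (by have := fin_int_lt h2; linarith))]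
    norm_num
  · rw [if_neg (asymm h1), if_pos h2, if_pos
      (mul_neg_of_pos_of_neg (by have := fin_int_lt h1; linarith) (fin_int_lt h2))]
    norm_num
  · rw [if_neg (asymm h1), if_neg (asymm h2), if_neg
      (not_lt.mpr (le_of_lt (mul_pos (by have := fin_int_lt h1; linarith)
        (by have := fin_int_lt h2; linarith))))]
    norm_num

lemma kendall_sum (x y : Run m) :
    (kendall x y : ℝ) = ∑ p ∈ pairsQ m, (1 - zab x p * zab y p) / 2 := by
  unfold kendall pairsQ
  rw [Finset.card_filter, Finset.sum_filter]
  push_cast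
  refine Finset.sum_congr rfl fun p _ => ?_
  by_cases hA : p.1 < p.2
  · rw [if_pos hA, ← ite_kendall x y hA]
    simp [hA]
  · simp [hA]

lemma sum_swap_lt {α : Type*} [Fintype α] [LinearOrder α] (g : α × α → ℝ) :
    ∑ q ∈ univ.filter (fun q : α × α => q.2 < q.1), g q
      = ∑ q ∈ univ.filter (fun q : α × α => q.1 < q.2), g q.swap := by
  refine Finset.sum_nbij' Prod.swap Prod.swap ?_ ?_ ?_ ?_ ?_ <;> simp [Prod.swap]

lemma sum_trichotomy {α : Type*} [Fintype α] [LinearOrder α] (g : α × α → ℝ) :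
    ∑ q : α × α, g q
      = ∑ q ∈ univ.filter (fun q : α × α => q.1 < q.2), g q
        + ∑ q ∈ univ.filter (fun q : α × α => q.2 < q.1), g q
        + ∑ a : α, g (a, a) := by
  classical
  have h := Finset.sum_filter_add_sum_filter_not (univ : Finset (α × α))
    (fun q => q.1 < q.2) g
  have h2 := Finset.sum_filter_add_sum_filter_not
    ((univ : Finset (α × α)).filter fun q => ¬ q.1 < q.2) (fun q => q.2 < q.1) g
  have e1 : ((univ : Finset (α × α)).filter fun q => ¬ q.1 < q.2).filter
      (fun q => q.2 < q.1) = univ.filter (fun q : α × α => q.2 < q.1) := by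
    ext q
    simp only [mem_filter, mem_univ, true_and]
    exact ⟨fun h => h.2, fun h => ⟨asymm h, h⟩⟩
  have e2 : ((univ : Finset (α × α)).filter fun q => ¬ q.1 < q.2).filter
      (fun q => ¬ q.2 < q.1) = (univ : Finset α).diag := by
    ext q
    simp only [mem_filter, mem_univ, true_and, Finset.mem_diag]
    constructor
    · rintro ⟨h1, h2⟩
      exact le_antisymm (not_lt.mp h2) (not_lt.mp h1)
    · intro h
      simp [h]
  rw [e1, e2, Finset.sum_diag] at h2
  linarith

lemma two_mul_card_lt {α : Type*} [Fintype α] [LinearOrder α] :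
    2 * (((univ : Finset (α × α)).filter fun q : α × α => q.1 < q.2).card : ℝ)
      = (Fintype.card α : ℝ) * (Fintype.card α : ℝ) - (Fintype.card α : ℝ) := by
  have h := sum_trichotomy (fun _ : α × α => (1 : ℝ))
  rw [sum_swap_lt (fun _ : α × α => (1 : ℝ))] at h
  simp only [Finset.sum_const, nsmul_eq_mul, mul_one, Finset.card_univ,
    Fintype.card_prod] at h
  push_cast at h
  linarith

lemma cross_sum {n : ℕ} (f : Fin n → ℝ) (hval : ∀ i, f i = 1 ∨ f i = -1)
    (hsum : ∑ i, f i = 0) :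
    ∑ q ∈ univ.filter (fun q : Fin n × Fin n => q.1 < q.2), f q.1 * f q.2
      = -(n : ℝ) / 2 := by
  have htri := sum_trichotomy (fun q : Fin n × Fin n => f q.1 * f q.2)
  have hsq : ∑ q : Fin n × Fin n, f q.1 * f q.2 = 0 := by
    rw [Fintype.sum_prod_type, ← Finset.sum_mul_sum, hsum, zero_mul]
  have hswap := sum_swap_lt (fun q : Fin n × Fin n => f q.1 * f q.2)
  simp only [Prod.fst_swap, Prod.snd_swap] at hswap
  have hdiag : ∑ a : Fin n, f a * f a = (n : ℝ) := by
    have : ∀ a : Fin n, f a * f a = 1 := by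
      intro a; rcases hval a with h | h <;> rw [h] <;> norm_num
    rw [Finset.sum_congr rfl fun a _ => this a]
    simp
  have hcomm : ∑ q ∈ univ.filter (fun q : Fin n × Fin n => q.1 < q.2), f q.2 * f q.1
      = ∑ q ∈ univ.filter (fun q : Fin n × Fin n => q.1 < q.2), f q.1 * f q.2 :=
    Finset.sum_congr rfl fun q _ => mul_comm _ _
  rw [hsq] at htri
  rw [hswap, hcomm] at htri
  linarith

lemma Jfull_zero {p : Fin m × Fin m} (hp : p.1 < p.2) :
    ∑ σ : Run m, zab σ p = 0 := by
  have hne : p.1 ≠ p.2 := ne_of_lt hp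
  have key : ∀ σ : Run m, zab (Equiv.swap p.1 p.2 * σ) p = - zab σ p := by
    intro σ
    have hx : σ.symm p.1 ≠ σ.symm p.2 := fun h => hne (σ.symm.injective h)
    have hs1 : (Equiv.swap p.1 p.2 * σ).symm p.1 = σ.symm p.2 := by
      simp [Equiv.Perm.mul_def, Equiv.swap_apply_left]
    have hs2 : (Equiv.swap p.1 p.2 * σ).symm p.2 = σ.symm p.1 := by
      simp [Equiv.Perm.mul_def, Equiv.swap_apply_right]
    unfold zab
    rw [hs1, hs2]
    rcases hx.lt_or_gt with h | h <;> simp [h, asymm h]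
  have h : ∑ σ : Run m, zab σ p = ∑ σ : Run m, zab (Equiv.swap p.1 p.2 * σ) p :=
    (Equiv.sum_comp (Equiv.mulLeft (Equiv.swap p.1 p.2)) (fun σ => zab σ p)).symm
  rw [Finset.sum_congr rfl (fun σ _ => key σ), Finset.sum_neg_distrib] at h
  linarith

end helpers

/-- For any design with `C₁(D) = C₂(D) = 0` (in particular, any OofA orthogonal array of
strength 2), the average Kendall tau distance attains the full-design benchmark. -/
theorem stmt8 {m n : ℕ} (hm : 2 ≤ m) (hn : 2 ≤ n) (D : Fin n → Run m)
    (hC1 : Cwlp D 1 = 0) (hC2 : Cwlp D 2 = 0) :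
    kave D = (n : ℝ) * (m : ℝ) * ((m : ℝ) - 1) / (4 * ((n : ℝ) - 1)) := by
  classical
  have hn0 : (n : ℝ) ≠ 0 := by positivity
  have hn1 : (n : ℝ) - 1 ≠ 0 := by
    have : (2 : ℝ) ≤ (n : ℝ) := by exact_mod_cast hn
    linarith
  -- Step 1: all singleton J-characteristics of D vanish
  have hJ : ∀ p ∈ pairsQ m, ∑ i, zab (D i) p = 0 := by
    intro p hp
    have hp' : p.1 < p.2 := (Finset.mem_filter.mp hp).2
    have hmem : ({p} : Finset (Fin m × Fin m)) ∈ (pairsQ m).powersetCard 1 :=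
      Finset.mem_powersetCard.mpr ⟨Finset.singleton_subset_iff.mpr hp,
        Finset.card_singleton p⟩
    unfold Cwlp at hC1
    have hterm := (Finset.sum_eq_zero_iff_of_nonneg
      (fun W _ => sq_nonneg _)).mp hC1 _ hmem
    have hfull : Jchar (fun σ : Run m => σ) {p} = 0 := by
      unfold Jchar
      simp only [Finset.prod_singleton]
      exact Jfull_zero hp'
    rw [hfull, zero_div, sub_zero] at hterm
    have : Jchar D {p} / (n : ℝ) = 0 := by
      exact pow_eq_zero_iff (two_ne_zero) |>.mp hterm
    have hJ0 : Jchar D {p} = 0 := by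
      field_simp at this
      simpa using this
    unfold Jchar at hJ0
    simpa only [Finset.prod_singleton] using hJ0
  -- Step 2: rewrite kave
  unfold kave
  rw [Finset.sum_congr rfl (fun q _ => kendall_sum (D q.1) (D q.2)),
    Finset.sum_comm]
  have inner : ∀ p ∈ pairsQ m,
      ∑ q ∈ Finset.univ.filter (fun q : Fin n × Fin n => q.1 < q.2),
        (1 - zab (D q.1) p * zab (D q.2) p) / 2
      = ((Finset.univ.filter (fun q : Fin n × Fin n => q.1 < q.2)).card : ℝ) / 2
          + (n : ℝ) / 4 := by
    intro p hp
    have hcross := cross_sum (fun i => zab (D i) p)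
      (fun i => by unfold zab; split <;> simp) (hJ p hp)
    rw [show ∀ (P : Finset (Fin n × Fin n)),
        ∑ q ∈ P, ((1 : ℝ) - zab (D q.1) p * zab (D q.2) p) / 2
        = ((∑ q ∈ P, (1 : ℝ)) - ∑ q ∈ P, zab (D q.1) p * zab (D q.2) p) / 2 from
      fun P => by rw [← Finset.sum_sub_distrib, Finset.sum_div]]
    rw [hcross]
    simp only [Finset.sum_const, nsmul_eq_mul, mul_one]
    ring
  rw [Finset.sum_congr rfl inner, Finset.sum_const, nsmul_eq_mul]
  have hP := two_mul_card_lt (α := Fin n)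
  have hQ := two_mul_card_lt (α := Fin m)
  simp only [Fintype.card_fin] at hP hQ
  have hQ' : ((pairsQ m).card : ℝ)
      = ((m : ℝ) * (m : ℝ) - (m : ℝ)) / 2 := by
    unfold pairsQ; linarith
  have hP' : (((Finset.univ.filter (fun q : Fin n × Fin n => q.1 < q.2)).card : ℝ))
      = ((n : ℝ) * (n : ℝ) - (n : ℝ)) / 2 := by linarith
  rw [hQ', hP', Nat.cast_choose_two]
  field_simp
  ring
end

section
/- Let D be a component orthogonal array COA(n,m) with n ≥ 2, i.e. an n-run OofA design on m components such that for every ordered pair of distinct positions r ≠ s and every ordered pair (a,b) of distinct components, the number of runs x_i with x_{ir} = a and x_{is} = b equals n/(m(m−1)). Then C_1(D) = 0, and consequently k_ave(D) = n m(m−1) / (4(n−1)). -/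
-- helper 1: cardinality of lt-pairs
lemma card_lt_pairs_s10 (k : ℕ) :
    (Finset.univ.filter fun p : Fin k × Fin k => p.1 < p.2).card = k.choose 2 := by
  classical
  have hsymm : (Finset.univ.filter fun p : Fin k × Fin k => p.1 < p.2).card
      = (Finset.univ.filter fun p : Fin k × Fin k => p.2 < p.1).card := by
    apply Finset.card_nbij' (fun p => p.swap) (fun p => p.swap) <;>
      simp [Finset.mem_filter, Set.MapsTo, Set.LeftInvOn, Set.RightInvOn]
  have hsplit := Finset.card_filter_add_card_filter_not
    (s := (Finset.univ : Finset (Fin k)).offDiag) (fun p : Fin k × Fin k => p.1 < p.2)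
  have h1 : ((Finset.univ : Finset (Fin k)).offDiag.filter fun p => p.1 < p.2)
      = Finset.univ.filter fun p : Fin k × Fin k => p.1 < p.2 := by
    ext p
    simp only [Finset.mem_filter, Finset.mem_offDiag, Finset.mem_univ, true_and]
    exact ⟨fun h => h.2, fun h => ⟨ne_of_lt h, h⟩⟩
  have h2 : ((Finset.univ : Finset (Fin k)).offDiag.filter fun p => ¬ p.1 < p.2)
      = Finset.univ.filter fun p : Fin k × Fin k => p.2 < p.1 := by
    ext p
    simp only [Finset.mem_filter, Finset.mem_offDiag, Finset.mem_univ, true_and, not_lt]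
    constructor
    · rintro ⟨hne, hle⟩; exact lt_of_le_of_ne hle (Ne.symm hne)
    · intro h; exact ⟨(ne_of_lt h).symm, le_of_lt h⟩
  rw [h1, h2, Finset.offDiag_card] at hsplit
  simp only [Finset.card_univ, Fintype.card_fin] at hsplit
  have hmul : k * (k - 1) = k * k - k := Nat.mul_pred ..
  rw [Nat.choose_two_right]
  omega

-- helper 7: square of a sum
lemma sq_sum_expand {k : ℕ} (f : Fin k → ℝ) :
    (∑ i, f i) ^ 2 = ∑ i, (f i) ^ 2 +
      2 * ∑ p ∈ Finset.univ.filter (fun p : Fin k × Fin k => p.1 < p.2), f p.1 * f p.2 := by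
  classical
  have h0 : (∑ i, f i) ^ 2 = ∑ p : Fin k × Fin k, f p.1 * f p.2 := by
    rw [sq, Finset.sum_mul_sum, ← Finset.univ_product_univ, Finset.sum_product]
  have hsplit : ∑ p : Fin k × Fin k, f p.1 * f p.2
      = (∑ p ∈ Finset.univ.filter (fun p : Fin k × Fin k => p.1 < p.2), f p.1 * f p.2)
        + ∑ p ∈ Finset.univ.filter (fun p : Fin k × Fin k => ¬ p.1 < p.2), f p.1 * f p.2 :=
    (Finset.sum_filter_add_sum_filter_not _ _ _).symm
  have hsplit2 : ∑ p ∈ Finset.univ.filter (fun p : Fin k × Fin k => ¬ p.1 < p.2), f p.1 * f p.2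
      = (∑ p ∈ (Finset.univ.filter (fun p : Fin k × Fin k => ¬ p.1 < p.2)).filter
            (fun p => p.2 < p.1), f p.1 * f p.2)
        + ∑ p ∈ (Finset.univ.filter (fun p : Fin k × Fin k => ¬ p.1 < p.2)).filter
            (fun p => ¬ p.2 < p.1), f p.1 * f p.2 :=
    (Finset.sum_filter_add_sum_filter_not _ _ _).symm
  have e1 : (Finset.univ.filter (fun p : Fin k × Fin k => ¬ p.1 < p.2)).filter
      (fun p => p.2 < p.1) = Finset.univ.filter (fun p : Fin k × Fin k => p.2 < p.1) := by
    ext p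
    simp only [Finset.mem_filter, Finset.mem_univ, true_and, not_lt]
    exact ⟨fun h => h.2, fun h => ⟨le_of_lt h, h⟩⟩
  have e2 : (Finset.univ.filter (fun p : Fin k × Fin k => ¬ p.1 < p.2)).filter
      (fun p => ¬ p.2 < p.1) = Finset.univ.filter (fun p : Fin k × Fin k => p.1 = p.2) := by
    ext p
    simp only [Finset.mem_filter, Finset.mem_univ, true_and, not_lt]
    constructor
    · rintro ⟨h1, h2⟩; exact le_antisymm h2 h1
    · intro h; exact ⟨le_of_eq h.symm, le_of_eq h⟩
  have hgt : ∑ p ∈ Finset.univ.filter (fun p : Fin k × Fin k => p.2 < p.1), f p.1 * f p.2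
      = ∑ p ∈ Finset.univ.filter (fun p : Fin k × Fin k => p.1 < p.2), f p.1 * f p.2 := by
    apply Finset.sum_nbij' (fun p => p.swap) (fun p => p.swap) <;>
      simp [Finset.mem_filter, mul_comm]
  have hdiag : ∑ p ∈ Finset.univ.filter (fun p : Fin k × Fin k => p.1 = p.2), f p.1 * f p.2
      = ∑ i, f i ^ 2 := by
    apply Finset.sum_nbij' (fun p => p.1) (fun i => (i, i)) <;>
      simp +contextual [Finset.mem_filter, sq, Prod.ext_iff]
  rw [h0, hsplit, hsplit2, e1, e2, hgt, hdiag]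
  ring

section main
variable {m n : ℕ} (D : Fin n → Run m)

-- helper 3: count of lt via COA
lemma coa_count (hm : 2 ≤ m)
    (hCOA : ∀ r s : Fin m, r ≠ s → ∀ a b : Fin m, a ≠ b →
      (Finset.univ.filter fun i : Fin n => D i r = a ∧ D i s = b).card * (m * (m - 1)) = n)
    {a b : Fin m} (hab : a ≠ b) :
    2 * (Finset.univ.filter fun i : Fin n => (D i).symm a < (D i).symm b).card = n := by
  classical
  -- generic: for any c ≠ d, card * (m*(m-1)) = (pairsQ m).card * n
  have key : ∀ c d : Fin m, c ≠ d →
      (Finset.univ.filter fun i : Fin n => (D i).symm c < (D i).symm d).card * (m * (m - 1))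
        = (pairsQ m).card * n := by
    intro c d hcd
    have hfib : (Finset.univ.filter fun i : Fin n => (D i).symm c < (D i).symm d).card
        = ∑ p ∈ pairsQ m, ((Finset.univ.filter fun i : Fin n =>
            (D i).symm c < (D i).symm d).filter
            (fun i => ((D i).symm c, (D i).symm d) = p)).card := by
      apply Finset.card_eq_sum_card_fiberwise
      intro i hi
      simp at hi
      simp [pairsQ, hi]
    have hfib2 : ∀ p ∈ pairsQ m,
        ((Finset.univ.filter fun i : Fin n => (D i).symm c < (D i).symm d).filter
          (fun i => ((D i).symm c, (D i).symm d) = p)).card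
        = (Finset.univ.filter fun i : Fin n => D i p.1 = c ∧ D i p.2 = d).card := by
      intro p hp
      simp only [pairsQ, Finset.mem_filter, Finset.mem_univ, true_and] at hp
      congr 1
      ext i
      simp only [Finset.mem_filter, Finset.mem_univ, true_and, Prod.ext_iff]
      constructor
      · rintro ⟨-, h1, h2⟩
        rw [← h1, ← h2]
        exact ⟨Equiv.apply_symm_apply _ _, Equiv.apply_symm_apply _ _⟩
      · rintro ⟨h1, h2⟩
        have e1 : (D i).symm c = p.1 := by rw [← h1]; exact Equiv.symm_apply_apply _ _
        have e2 : (D i).symm d = p.2 := by rw [← h2]; exact Equiv.symm_apply_apply _ _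
        exact ⟨by rw [e1, e2]; exact hp, e1, e2⟩
    rw [hfib, Finset.sum_congr rfl hfib2, Finset.sum_mul]
    rw [Finset.sum_congr rfl (fun p hp => ?_), Finset.sum_const, smul_eq_mul]
    have hp' : p.1 ≠ p.2 := by
      simp only [pairsQ, Finset.mem_filter] at hp; exact ne_of_lt hp.2
    exact hCOA p.1 p.2 hp' c d hcd
  have h1 := key a b hab
  have h2 := key b a hab.symm
  have hmm : 0 < m * (m - 1) := by
    have : 1 ≤ m - 1 := by omega
    exact Nat.mul_pos (by omega) this
  have heq : (Finset.univ.filter fun i : Fin n => (D i).symm a < (D i).symm b).card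
      = (Finset.univ.filter fun i : Fin n => (D i).symm b < (D i).symm a).card :=
    Nat.eq_of_mul_eq_mul_right hmm (h1.trans h2.symm)
  have hsplit := Finset.card_filter_add_card_filter_not
    (s := (Finset.univ : Finset (Fin n))) (fun i => (D i).symm a < (D i).symm b)
  have hneg : (Finset.univ.filter fun i : Fin n => ¬ (D i).symm a < (D i).symm b)
      = Finset.univ.filter fun i : Fin n => (D i).symm b < (D i).symm a := by
    ext i
    simp only [Finset.mem_filter, Finset.mem_univ, true_and, not_lt]
    constructor
    · intro h
      refine lt_of_le_of_ne h (fun hc => hab ?_)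
      have := (D i).symm.injective hc
      exact this.symm
    · exact le_of_lt
  rw [hneg, ← heq, Finset.card_univ, Fintype.card_fin] at hsplit
  omega

-- helper 4: zab sums to zero over a COA
lemma sum_zab_zero (hm : 2 ≤ m)
    (hCOA : ∀ r s : Fin m, r ≠ s → ∀ a b : Fin m, a ≠ b →
      (Finset.univ.filter fun i : Fin n => D i r = a ∧ D i s = b).card * (m * (m - 1)) = n)
    {p : Fin m × Fin m} (hp : p.1 ≠ p.2) :
    ∑ i, zab (D i) p = 0 := by
  classical
  have hcount := coa_count D hm hCOA hp
  have : ∑ i, zab (D i) p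
      = 2 * ((Finset.univ.filter fun i : Fin n => (D i).symm p.1 < (D i).symm p.2).card : ℝ)
        - n := by
    unfold zab
    have : ∀ i : Fin n, (if (D i).symm p.1 < (D i).symm p.2 then (1:ℝ) else -1)
        = 2 * (if (D i).symm p.1 < (D i).symm p.2 then (1:ℝ) else 0) - 1 := by
      intro i; split <;> norm_num
    rw [Finset.sum_congr rfl (fun i _ => this i)]
    rw [Finset.sum_sub_distrib, ← Finset.mul_sum, Finset.sum_boole, Finset.sum_const]
    simp
  rw [this]
  have : ((2 * (Finset.univ.filter fun i : Fin n =>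
      (D i).symm p.1 < (D i).symm p.2).card : ℕ) : ℝ) = (n : ℝ) := by
    exact_mod_cast congrArg (Nat.cast : ℕ → ℝ) hcount
  push_cast at this
  linarith

end main

-- helper 5: full design zab sum is zero
lemma sum_zab_full_zero {m : ℕ} {p : Fin m × Fin m} (hp : p.1 ≠ p.2) :
    ∑ σ : Run m, zab σ p = 0 := by
  classical
  have hre : ∑ σ : Run m, zab σ p = ∑ σ : Run m, zab (Equiv.swap p.1 p.2 * σ) p := by
    exact (Equiv.sum_comp (Equiv.mulLeft (Equiv.swap p.1 p.2)) (fun σ => zab σ p)).symm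
  have hflip : ∀ σ : Run m, zab (Equiv.swap p.1 p.2 * σ) p = - zab σ p := by
    intro σ
    have h1 : (Equiv.swap p.1 p.2 * σ).symm p.1 = σ.symm p.2 := by
      simp [Equiv.Perm.mul_def, Equiv.symm_trans_apply, Equiv.symm_swap, Equiv.swap_apply_left]
    have h2 : (Equiv.swap p.1 p.2 * σ).symm p.2 = σ.symm p.1 := by
      simp [Equiv.Perm.mul_def, Equiv.symm_trans_apply, Equiv.symm_swap, Equiv.swap_apply_right]
    have hne : σ.symm p.1 ≠ σ.symm p.2 := fun h => hp (σ.symm.injective h)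
    unfold zab
    rw [h1, h2]
    rcases lt_or_gt_of_ne hne with h | h
    · rw [if_pos h, if_neg (not_lt.mpr (le_of_lt h))]; try norm_num
    · rw [if_neg (not_lt.mpr (le_of_lt h)), if_pos h]; try norm_num
  have : ∑ σ : Run m, zab σ p = - ∑ σ : Run m, zab σ p := by
    calc ∑ σ : Run m, zab σ p = ∑ σ : Run m, zab (Equiv.swap p.1 p.2 * σ) p := hre
    _ = ∑ σ : Run m, - zab σ p := Finset.sum_congr rfl (fun σ _ => hflip σ)
    _ = - ∑ σ : Run m, zab σ p := by rw [Finset.sum_neg_distrib]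
  linarith

-- helper 6: kendall expansion
lemma kendall_expand {m : ℕ} (x y : Run m) :
    (kendall x y : ℝ) = ∑ p ∈ pairsQ m, (1 - zab x p * zab y p) / 2 := by
  classical
  have hset : (Finset.univ.filter fun p : Fin m × Fin m =>
      p.1 < p.2 ∧
        (((x.symm p.1 : ℕ) : ℤ) - ((x.symm p.2 : ℕ) : ℤ)) *
          (((y.symm p.1 : ℕ) : ℤ) - ((y.symm p.2 : ℕ) : ℤ)) < 0)
      = (pairsQ m).filter (fun p =>
        (((x.symm p.1 : ℕ) : ℤ) - ((x.symm p.2 : ℕ) : ℤ)) *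
          (((y.symm p.1 : ℕ) : ℤ) - ((y.symm p.2 : ℕ) : ℤ)) < 0) := by
    rw [pairsQ, Finset.filter_filter]
  rw [kendall, hset]
  rw [← Finset.sum_boole]
  apply Finset.sum_congr rfl
  intro p hp
  have hlt : p.1 < p.2 := by
    simp only [pairsQ, Finset.mem_filter] at hp; exact hp.2
  have hnex : x.symm p.1 ≠ x.symm p.2 := fun h => (ne_of_lt hlt) (x.symm.injective h)
  have hney : y.symm p.1 ≠ y.symm p.2 := fun h => (ne_of_lt hlt) (y.symm.injective h)
  unfold zab
  by_cases h1 : x.symm p.1 < x.symm p.2 <;> by_cases h2 : y.symm p.1 < y.symm p.2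
  · have i1 : ((x.symm p.1 : ℕ) : ℤ) < ((x.symm p.2 : ℕ) : ℤ) := by exact_mod_cast h1
    have i2 : ((y.symm p.1 : ℕ) : ℤ) < ((y.symm p.2 : ℕ) : ℤ) := by exact_mod_cast h2
    rw [if_neg (by nlinarith), if_pos h1, if_pos h2]; norm_num
  · have i1 : ((x.symm p.1 : ℕ) : ℤ) < ((x.symm p.2 : ℕ) : ℤ) := by exact_mod_cast h1
    have h2' : y.symm p.2 < y.symm p.1 := lt_of_le_of_ne (not_lt.mp h2) hney.symm
    have i2 : ((y.symm p.2 : ℕ) : ℤ) < ((y.symm p.1 : ℕ) : ℤ) := by exact_mod_cast h2'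
    rw [if_pos (by nlinarith), if_pos h1, if_neg h2]; norm_num
  · have h1' : x.symm p.2 < x.symm p.1 := lt_of_le_of_ne (not_lt.mp h1) hnex.symm
    have i1 : ((x.symm p.2 : ℕ) : ℤ) < ((x.symm p.1 : ℕ) : ℤ) := by exact_mod_cast h1'
    have i2 : ((y.symm p.1 : ℕ) : ℤ) < ((y.symm p.2 : ℕ) : ℤ) := by exact_mod_cast h2
    rw [if_pos (by nlinarith), if_neg h1, if_pos h2]; norm_num
  · have h1' : x.symm p.2 < x.symm p.1 := lt_of_le_of_ne (not_lt.mp h1) hnex.symm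
    have h2' : y.symm p.2 < y.symm p.1 := lt_of_le_of_ne (not_lt.mp h2) hney.symm
    have i1 : ((x.symm p.2 : ℕ) : ℤ) < ((x.symm p.1 : ℕ) : ℤ) := by exact_mod_cast h1'
    have i2 : ((y.symm p.2 : ℕ) : ℤ) < ((y.symm p.1 : ℕ) : ℤ) := by exact_mod_cast h2'
    rw [if_neg (by nlinarith), if_neg h1, if_neg h2]; norm_num

/-- A component orthogonal array COA(n,m): for every pair of distinct positions `r ≠ s`
and every ordered pair of distinct components `a ≠ b`, the number of runs `x_i` with
`x_i(r) = a` and `x_i(s) = b` equals `n/(m(m−1))`. Then `C₁(D) = 0` and consequently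
`k_ave(D) = n m(m−1)/(4(n−1))`. -/
theorem stmt10 {m n : ℕ} (hm : 2 ≤ m) (hn : 2 ≤ n) (D : Fin n → Run m)
    (hCOA : ∀ r s : Fin m, r ≠ s → ∀ a b : Fin m, a ≠ b →
      (Finset.univ.filter fun i : Fin n => D i r = a ∧ D i s = b).card * (m * (m - 1)) = n) :
    Cwlp D 1 = 0 ∧
      kave D = (n : ℝ) * (m : ℝ) * ((m : ℝ) - 1) / (4 * ((n : ℝ) - 1)) := by
  classical
  constructor
  · unfold Cwlp
    apply Finset.sum_eq_zero
    intro W hW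
    rw [Finset.mem_powersetCard] at hW
    obtain ⟨hsub, hcard⟩ := hW
    obtain ⟨p, rfl⟩ := Finset.card_eq_one.mp hcard
    have hp : p ∈ pairsQ m := hsub (Finset.mem_singleton_self p)
    have hne : p.1 ≠ p.2 := by
      simp only [pairsQ, Finset.mem_filter] at hp; exact ne_of_lt hp.2
    have j1 : Jchar D {p} = 0 := by
      unfold Jchar; simp only [Finset.prod_singleton]
      exact sum_zab_zero D hm hCOA hne
    have j2 : Jchar (fun σ : Run m => σ) {p} = 0 := by
      unfold Jchar; simp only [Finset.prod_singleton]
      exact sum_zab_full_zero hne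
    rw [j1, j2]
    norm_num
  · unfold kave
    have hker : ∀ q ∈ (Finset.univ.filter fun q : Fin n × Fin n => q.1 < q.2),
        (kendall (D q.1) (D q.2) : ℝ)
          = ∑ p ∈ pairsQ m, (1 - zab (D q.1) p * zab (D q.2) p) / 2 :=
      fun q _ => kendall_expand _ _
    rw [Finset.sum_congr rfl hker, Finset.sum_comm]
    have inner : ∀ p ∈ pairsQ m,
        ∑ q ∈ (Finset.univ.filter fun q : Fin n × Fin n => q.1 < q.2),
          (1 - zab (D q.1) p * zab (D q.2) p) / 2
        = ((n.choose 2 : ℝ) + (n : ℝ) / 2) / 2 := by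
      intro p hp
      have hne : p.1 ≠ p.2 := by
        simp only [pairsQ, Finset.mem_filter] at hp; exact ne_of_lt hp.2
      have hz : ∑ i, zab (D i) p = 0 := sum_zab_zero D hm hCOA hne
      have hsq := sq_sum_expand (fun i => zab (D i) p)
      rw [hz] at hsq
      have hz2 : ∑ i, (zab (D i) p) ^ 2 = (n : ℝ) := by
        have : ∀ i : Fin n, (zab (D i) p) ^ 2 = 1 := by
          intro i; unfold zab; split <;> norm_num
        rw [Finset.sum_congr rfl (fun i _ => this i), Finset.sum_const]
        simp
      rw [hz2] at hsq
      have hzz : ∑ q ∈ (Finset.univ.filter fun q : Fin n × Fin n => q.1 < q.2),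
          zab (D q.1) p * zab (D q.2) p = -(n : ℝ) / 2 := by linarith
      calc ∑ q ∈ (Finset.univ.filter fun q : Fin n × Fin n => q.1 < q.2),
            (1 - zab (D q.1) p * zab (D q.2) p) / 2
          = (∑ q ∈ (Finset.univ.filter fun q : Fin n × Fin n => q.1 < q.2),
              (1 - zab (D q.1) p * zab (D q.2) p)) / 2 := by rw [Finset.sum_div]
        _ = (((Finset.univ.filter fun q : Fin n × Fin n => q.1 < q.2).card : ℝ)
              - ∑ q ∈ (Finset.univ.filter fun q : Fin n × Fin n => q.1 < q.2),
                  zab (D q.1) p * zab (D q.2) p) / 2 := by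
            rw [Finset.sum_sub_distrib, Finset.sum_const, nsmul_eq_mul, mul_one]
        _ = ((n.choose 2 : ℝ) + (n : ℝ) / 2) / 2 := by
            rw [card_lt_pairs_s10 n, hzz]; ring
    rw [Finset.sum_congr rfl inner, Finset.sum_const, nsmul_eq_mul]
    have hQ : ((pairsQ m).card : ℝ) = (m.choose 2 : ℝ) := by
      rw [show (pairsQ m).card = m.choose 2 from card_lt_pairs_s10 m]
    rw [hQ, Nat.cast_choose_two, Nat.cast_choose_two]
    have h2n : (2 : ℝ) ≤ (n : ℝ) := by exact_mod_cast hn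
    have hn0 : (n : ℝ) ≠ 0 := by linarith
    have hn1 : (n : ℝ) - 1 ≠ 0 := by intro h; linarith
    field_simp
    ring
end
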